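/- arXiv:1608.03204 — 16 statements merged into one kernel-verified Lean document; each statement's English description precedes it below -/
import Mathlib

section
/- Let (X_i,κ_i) and (Y_i,λ_i) be digital images with each X_i nonempty, and let f_i : X_i → Y_i be functions, 1≤i≤v. Then the product map Π_{i=1}^v f_i : (Π_{i=1}^v X_i, NP_v(κ_1,…,κ_v)) → (Π_{i=1}^v Y_i, NP_v(λ_1,…,λ_v)), defined by (x_1,…,x_v) ↦ (f_1(x_1),…,f_v(x_v)), is continuous if and only if each f_i is (κ_i,λ_i)-continuous. -/
/-- `(κ,λ)`-continuity: adjacent points have equal or adjacent images. -/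
def DContinuous {X Y : Type*} (κ : X → X → Prop) (lam : Y → Y → Prop)
    (f : X → Y) : Prop :=
  ∀ x x', κ x x' → f x = f x' ∨ lam (f x) (f x')

/-- The normal product adjacency `NP_v(κ_1,…,κ_v)` on a finite product of digital images. -/
def NP {v : ℕ} {X : Fin v → Type*} (κ : ∀ i, X i → X i → Prop)
    (p q : ∀ i, X i) : Prop :=
  p ≠ q ∧ ∀ i, p i = q i ∨ κ i (p i) (q i)

/-- The product map `Π f_i` is `(NP_v(κ),NP_v(λ))`-continuous iff
each `f_i` is `(κ_i,λ_i)`-continuous (each `X_i` nonempty). -/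
theorem stmt2 (v : ℕ) (X Y : Fin v → Type*)
    (κ : ∀ i, X i → X i → Prop) (lam : ∀ i, Y i → Y i → Prop)
    (hκi : ∀ i x, ¬ κ i x x) (hκs : ∀ i x y, κ i x y → κ i y x)
    (hli : ∀ i y, ¬ lam i y y) (hls : ∀ i y y', lam i y y' → lam i y' y)
    (hne : ∀ i, Nonempty (X i))
    (f : ∀ i, X i → Y i) :
    DContinuous (NP κ) (NP lam) (fun x i => f i (x i)) ↔
      ∀ i, DContinuous (κ i) (lam i) (f i) := by
  classical
  constructor
  · intro h i x x' hxx
    have base : ∀ j, X j := fun j => Classical.choice (hne j)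
    let p : ∀ j, X j := fun j => if hj : j = i then hj ▸ x else base j
    let q : ∀ j, X j := fun j => if hj : j = i then hj ▸ x' else base j
    have hpi : p i = x := by simp [p]
    have hqi : q i = x' := by simp [q]
    have hxne : x ≠ x' := fun h' => hκi i x (h' ▸ hxx)
    have hpq : NP κ p q := by
      refine ⟨fun h' => hxne (by rw [← hpi, ← hqi, h']), fun j => ?_⟩
      by_cases hj : j = i
      · subst hj; right; rw [hpi, hqi]; exact hxx
      · left; simp [p, q, hj]
    rcases h p q hpq with heq | ⟨_, hadj⟩
    · left; have := congrFun heq i; simpa [hpi, hqi] using this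
    · have := hadj i; simpa [hpi, hqi] using this
  · intro h p q ⟨hpq, hadj⟩
    by_cases heq : (fun i => f i (p i)) = (fun i => f i (q i))
    · exact Or.inl heq
    · refine Or.inr ⟨heq, fun i => ?_⟩
      rcases hadj i with h1 | h1
      · left; show f i (p i) = f i (q i); rw [h1]
      · show f i (p i) = f i (q i) ∨ lam i (f i (p i)) (f i (q i))
        exact h i _ _ h1
end

section
/- Let (X_i,κ_i) and (Y_i,λ_i) be digital images with each X_i nonempty, and let f_i : X_i → Y_i be functions, 1≤i≤v. (a) For any u with 1≤u≤v, if the product map Π_{i=1}^v f_i : (Π X_i, NP_u(κ_1,…,κ_v)) → (Π Y_i, NP_u(λ_1,…,λ_v)) is an isomorphism, then each f_i is a (κ_i,λ_i)-isomorphism. (b) If each f_i is a (κ_i,λ_i)-isomorphism, then Π_{i=1}^v f_i : (Π X_i, NP_v(κ_1,…,κ_v)) → (Π Y_i, NP_v(λ_1,…,λ_v)) is an isomorphism. -/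
/-- The adjacency `NP_u(κ_1,…,κ_v)` on `Π_{i=1}^v X_i`: `p` and `q` are adjacent iff
`p i` and `q i` are `κ i`-adjacent for at least 1 and at most `u` indices `i`, and
`p i = q i` for all other indices. -/
def NPu {v : ℕ} {X : Fin v → Type*} (u : ℕ) (κ : ∀ i, X i → X i → Prop)
    (p q : ∀ i, X i) : Prop :=
  1 ≤ {i | κ i (p i) (q i)}.ncard ∧ {i | κ i (p i) (q i)}.ncard ≤ u ∧
    ∀ i, ¬ κ i (p i) (q i) → p i = q i

/-- An isomorphism of digital images: a continuous bijection whose inverse is also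
continuous (the last condition expresses continuity of the inverse function). -/
def DIso {X Y : Type*} (κ : X → X → Prop) (lam : Y → Y → Prop) (f : X → Y) : Prop :=
  Function.Bijective f ∧ DContinuous κ lam f ∧
    ∀ x x' : X, lam (f x) (f x') → x = x' ∨ κ x x'

/-- (a) For `1 ≤ u ≤ v`, if the product map is an `(NP_u,NP_u)`-isomorphism
then each `f_i` is a `(κ_i,λ_i)`-isomorphism; (b) if each `f_i` is an isomorphism then the
product map is an `(NP_v,NP_v)`-isomorphism. -/
theorem stmt4 (v u : ℕ) (hu1 : 1 ≤ u) (huv : u ≤ v) (X Y : Fin v → Type*)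
    (κ : ∀ i, X i → X i → Prop) (lam : ∀ i, Y i → Y i → Prop)
    (hκi : ∀ i x, ¬ κ i x x) (hκs : ∀ i x y, κ i x y → κ i y x)
    (hli : ∀ i y, ¬ lam i y y) (hls : ∀ i y y', lam i y y' → lam i y' y)
    (hne : ∀ i, Nonempty (X i))
    (f : ∀ i, X i → Y i) :
    (DIso (NPu u κ) (NPu u lam) (fun x i => f i (x i)) →
      ∀ i, DIso (κ i) (lam i) (f i)) ∧
    ((∀ i, DIso (κ i) (lam i) (f i)) →
      DIso (NPu v κ) (NPu v lam) (fun x i => f i (x i))) := by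
  constructor
  · rintro ⟨hFbij, hFcont, hFinv⟩ i
    have x₀ : ∀ j, X j := fun j => (hne j).some
    -- helper : the κ-adjacency set between two updates is {i} when κ i a b holds
    have hset : ∀ (a b : X i), κ i a b →
        {j | κ j (Function.update x₀ i a j) (Function.update x₀ i b j)} = {i} := by
      intro a b hab
      ext j
      by_cases hj : j = i
      · subst hj; simp [hab]
      · simp [Function.update_of_ne hj, hj, hκi]
    have hNP : ∀ (a b : X i), κ i a b →
        NPu u κ (Function.update x₀ i a) (Function.update x₀ i b) := by
      intro a b hab
      refine ⟨?_, ?_, ?_⟩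
      · rw [hset a b hab]; simp
      · rw [hset a b hab]; simpa using hu1
      · intro j hj
        by_cases hji : j = i
        · subst hji; simp [hab] at hj
        · simp [Function.update_of_ne hji]
    -- injectivity
    have hinj : Function.Injective (f i) := by
      intro a b hab
      have : (fun j => f j (Function.update x₀ i a j)) =
          (fun j => f j (Function.update x₀ i b j)) := by
        funext j
        by_cases hj : j = i
        · subst hj; simpa using hab
        · simp [Function.update_of_ne hj]
      have := hFbij.1 this
      have := congrFun this i
      simpa using this
    have hsurj : Function.Surjective (f i) := by
      intro y
      obtain ⟨p, hp⟩ := hFbij.2 (Function.update (fun j => f j (x₀ j)) i y)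
      exact ⟨p i, by simpa using congrFun hp i⟩
    refine ⟨⟨hinj, hsurj⟩, ?_, ?_⟩
    · intro a b hab
      rcases hFcont _ _ (hNP a b hab) with h | ⟨_, _, h3⟩
      · left
        have := congrFun h i
        simpa using this
      · by_cases hl : lam i (f i a) (f i b)
        · exact Or.inr hl
        · left
          have := h3 i (by simpa using hl)
          simpa using this
    · intro a b hab
      -- images adjacency set is {i}
      have hNPl : NPu u lam (fun j => f j (Function.update x₀ i a j))
          (fun j => f j (Function.update x₀ i b j)) := by
        have hsl : {j | lam j (f j (Function.update x₀ i a j))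
            (f j (Function.update x₀ i b j))} = {i} := by
          ext j
          by_cases hj : j = i
          · subst hj; simp [hab]
          · simp [Function.update_of_ne hj, hli, hj]
        refine ⟨?_, ?_, ?_⟩
        · rw [hsl]; simp
        · rw [hsl]; simpa using hu1
        · intro j hj
          by_cases hji : j = i
          · subst hji; simp [hab] at hj
          · simp [Function.update_of_ne hji]
      rcases hFinv _ _ hNPl with h | ⟨_, _, h3⟩
      · left
        have := congrFun h i
        simpa using this
      · by_cases hk : κ i a b
        · exact Or.inr hk
        · left
          have := h3 i (by simpa using hk)
          simpa using this
  · intro hf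
    have hb : ∀ i, Function.Bijective (f i) := fun i => (hf i).1
    have hc : ∀ i, DContinuous (κ i) (lam i) (f i) := fun i => (hf i).2.1
    have hi' : ∀ i x x', lam i (f i x) (f i x') → x = x' ∨ κ i x x' :=
      fun i => (hf i).2.2
    have hTS : ∀ (p q : ∀ i, X i),
        {i | lam i (f i (p i)) (f i (q i))} = {i | κ i (p i) (q i)} := by
      intro p q
      ext i
      simp only [Set.mem_setOf_eq]
      constructor
      · intro h
        rcases hi' i _ _ h with he | hk
        · rw [he] at h; exact absurd h (hli i _)
        · exact hk
      · intro h
        rcases hc i _ _ h with he | hl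
        · have := (hb i).1 he
          rw [this] at h; exact absurd h (hκi i _)
        · exact hl
    refine ⟨⟨?_, ?_⟩, ?_, ?_⟩
    · intro p q h
      funext j
      exact (hb j).1 (congrFun h j)
    · intro q
      exact ⟨fun i => Function.surjInv (hb i).2 (q i),
        funext fun i => Function.surjInv_eq _ _⟩
    · intro p q ⟨h1, h2, h3⟩
      refine Or.inr ⟨?_, ?_, ?_⟩
      · rw [hTS]; exact h1
      · rw [hTS]; exact h2
      · intro i hl
        have hk : ¬ κ i (p i) (q i) := by
          intro hk
          exact hl (by have := hTS p q; rw [Set.ext_iff] at this; exact (this i).2 hk)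
        exact congrArg (f i) (h3 i hk)
    · intro p q ⟨h1, h2, h3⟩
      rw [hTS] at h1 h2
      refine Or.inr ⟨h1, h2, ?_⟩
      intro i hk
      have hl : ¬ lam i (f i (p i)) (f i (q i)) := by
        intro hl
        exact hk (by have := hTS p q; rw [Set.ext_iff] at this; exact (this i).1 hl)
      exact (hb i).1 (h3 i hl)
end

section
/- Let (X_i,κ_i) and (Y_i,λ_i) be digital images, let f_i,g_i : X_i → Y_i be continuous functions, and let H_i : X_i × [0,m_i]_ℤ → Y_i be a homotopy from f_i to g_i, 1≤i≤v. Then there is a homotopy H between the product maps F=Π_{i=1}^v f_i and G=Π_{i=1}^v g_i, regarded as maps from (Π X_i, NP_v(κ_1,…,κ_v)) to (Π Y_i, NP_v(λ_1,…,λ_v)). Moreover, if each H_i is pointed at (x_i,y_i), then H may be taken pointed at ((x_1,…,x_v),(y_1,…,y_v)). -/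
/-- `H : X × [0,m]_ℤ → Y` is a homotopy from `f` to `g`. -/
def IsHomotopy {X Y : Type*} (κ : X → X → Prop) (lam : Y → Y → Prop)
    (f g : X → Y) (m : ℕ) (H : X → ℤ → Y) : Prop :=
  DContinuous κ lam f ∧ DContinuous κ lam g ∧
  (∀ x, H x 0 = f x) ∧ (∀ x, H x (m : ℤ) = g x) ∧
  (∀ x, ∀ t ∈ Set.Icc (0:ℤ) (m:ℤ), ∀ t' ∈ Set.Icc (0:ℤ) (m:ℤ),
      |t - t'| = 1 → H x t = H x t' ∨ lam (H x t) (H x t')) ∧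
  (∀ t ∈ Set.Icc (0:ℤ) (m:ℤ), ∀ x x', κ x x' →
      H x t = H x' t ∨ lam (H x t) (H x' t))

/-- If `H_i` is a homotopy from `f_i` to `g_i` for each `i`, then there is a
homotopy between the product maps `Π f_i` and `Π g_i` with respect to the normal product
adjacencies.  Moreover, if each `H_i` is pointed at `(x_i, y_i)` (i.e. `H_i (x_i) t = y_i`
for all `t ∈ [0,m_i]_ℤ`), then the product homotopy may be taken pointed at the tuples. -/
theorem stmt5 (v : ℕ) (X Y : Fin v → Type*)
    (κ : ∀ i, X i → X i → Prop) (lam : ∀ i, Y i → Y i → Prop)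
    (hκi : ∀ i x, ¬ κ i x x) (hκs : ∀ i x y, κ i x y → κ i y x)
    (hli : ∀ i y, ¬ lam i y y) (hls : ∀ i y y', lam i y y' → lam i y' y)
    (f g : ∀ i, X i → Y i) (m : Fin v → ℕ) (H : ∀ i, X i → ℤ → Y i)
    (hH : ∀ i, IsHomotopy (κ i) (lam i) (f i) (g i) (m i) (H i)) :
    (∃ (M : ℕ) (K : (∀ i, X i) → ℤ → (∀ i, Y i)),
        IsHomotopy (NP κ) (NP lam)
          (fun x i => f i (x i)) (fun x i => g i (x i)) M K) ∧
    (∀ (x₀ : ∀ i, X i) (y₀ : ∀ i, Y i),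
      (∀ i, ∀ t ∈ Set.Icc (0:ℤ) ((m i : ℤ)), H i (x₀ i) t = y₀ i) →
      ∃ (M : ℕ) (K : (∀ i, X i) → ℤ → (∀ i, Y i)),
        IsHomotopy (NP κ) (NP lam)
          (fun x i => f i (x i)) (fun x i => g i (x i)) M K ∧
        ∀ t ∈ Set.Icc (0:ℤ) (M:ℤ), K x₀ t = y₀) := by
  classical
  set M : ℕ := Finset.univ.sup m with hMdef
  have hmM : ∀ i, (m i : ℤ) ≤ (M : ℤ) := fun i => by
    exact_mod_cast Finset.le_sup (Finset.mem_univ i)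
  set K : (∀ i, X i) → ℤ → (∀ i, Y i) :=
    fun x t i => H i (x i) (min t (m i)) with hKdef
  have comb : ∀ (p q : ∀ i, Y i), (∀ i, p i = q i ∨ lam i (p i) (q i)) →
      p = q ∨ NP lam p q := by
    intro p q h
    by_cases hpq : p = q
    · exact Or.inl hpq
    · exact Or.inr ⟨hpq, h⟩
  have hmem : ∀ (i : Fin v) (t : ℤ), t ∈ Set.Icc (0:ℤ) (M:ℤ) →
      min t (m i) ∈ Set.Icc (0:ℤ) ((m i : ℤ)) := by
    intro i t ht
    have h0 : (0:ℤ) ≤ (m i : ℤ) := by positivity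
    exact ⟨le_min ht.1 h0, min_le_right _ _⟩
  have hKhom : IsHomotopy (NP κ) (NP lam)
      (fun x i => f i (x i)) (fun x i => g i (x i)) M K := by
    refine ⟨?_, ?_, ?_, ?_, ?_, ?_⟩
    · intro x x' ⟨hne, hadj⟩
      refine comb _ _ fun i => ?_
      rcases hadj i with h | h
      · exact Or.inl (congrArg (f i) h)
      · exact (hH i).1 _ _ h
    · intro x x' ⟨hne, hadj⟩
      refine comb _ _ fun i => ?_
      rcases hadj i with h | h
      · exact Or.inl (congrArg (g i) h)
      · exact (hH i).2.1 _ _ h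
    · intro x
      funext i
      have : min (0:ℤ) (m i) = 0 := min_eq_left (by positivity)
      simp only [hKdef, this]
      exact (hH i).2.2.1 _
    · intro x
      funext i
      have : min ((M:ℤ)) (m i) = (m i : ℤ) := min_eq_right (hmM i)
      simp only [hKdef, this]
      exact (hH i).2.2.2.1 _
    · intro x t ht t' ht' habs
      refine comb _ _ fun i => ?_
      by_cases heq : min t (m i) = min t' (m i)
      · exact Or.inl (by simp only [hKdef, heq])
      · have h1 : t - t' = 1 ∨ t - t' = -1 := by
          rcases (abs_eq (by norm_num : (0:ℤ) ≤ 1)).mp habs with h | h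
          · exact Or.inl h
          · exact Or.inr h
        have habs' : |min t (m i) - min t' (m i)| = 1 := by
          have hd : min t (m i) - min t' (m i) = 1 ∨ min t (m i) - min t' (m i) = -1 := by
            rcases le_total t (m i) with h2 | h2 <;> rcases le_total t' (m i) with h3 | h3 <;>
              simp only [min_eq_left, min_eq_right, h2, h3] <;> omega
          rcases hd with hd | hd <;> rw [hd] <;> norm_num
        exact (hH i).2.2.2.2.1 _ _ (hmem i t ht) _ (hmem i t' ht') habs'
    · intro t ht x x' ⟨hne, hadj⟩
      refine comb _ _ fun i => ?_
      rcases hadj i with h | h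
      · exact Or.inl (congrArg (fun z => H i z (min t (m i))) h)
      · exact (hH i).2.2.2.2.2 _ (hmem i t ht) _ _ h
  refine ⟨⟨M, K, hKhom⟩, ?_⟩
  intro x₀ y₀ hp
  refine ⟨M, K, hKhom, ?_⟩
  intro t ht
  funext i
  exact hp i _ (hmem i t ht)
end

section
/- Suppose (X_i,κ_i) is homotopy equivalent to (Y_i,λ_i) for 1≤i≤v. Then (Π_{i=1}^v X_i, NP_v(κ_1,…,κ_v)) is homotopy equivalent to (Π_{i=1}^v Y_i, NP_v(λ_1,…,λ_v)). Further, if each homotopy equivalence X_i ≃ Y_i is pointed with respect to x_i ∈ X_i and y_i ∈ Y_i, then the homotopy equivalence of the products is pointed with respect to (x_1,…,x_v) and (y_1,…,y_v). -/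
/-- `f ≃ g` : the maps are digitally homotopic. -/
def Homotopic {X Y : Type*} (κ : X → X → Prop) (lam : Y → Y → Prop)
    (f g : X → Y) : Prop :=
  ∃ m H, IsHomotopy κ lam f g m H

/-- `(X,κ)` and `(Y,λ)` are homotopy equivalent. -/
def HtpyEquiv {X Y : Type*} (κ : X → X → Prop) (lam : Y → Y → Prop) : Prop :=
  ∃ (f : X → Y) (g : Y → X), DContinuous κ lam f ∧ DContinuous lam κ g ∧
    Homotopic κ κ (fun x => g (f x)) id ∧ Homotopic lam lam (fun y => f (g y)) id

/-- Pointed homotopy equivalence with respect to `x₀ ∈ X` and `y₀ ∈ Y`: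
`f x₀ = y₀`, `g y₀ = x₀`, and the homotopies hold `x₀`, respectively `y₀`, fixed. -/
def PtdHtpyEquiv {X Y : Type*} (κ : X → X → Prop) (lam : Y → Y → Prop)
    (x₀ : X) (y₀ : Y) : Prop :=
  ∃ (f : X → Y) (g : Y → X), DContinuous κ lam f ∧ DContinuous lam κ g ∧
    f x₀ = y₀ ∧ g y₀ = x₀ ∧
    (∃ m H, IsHomotopy κ κ (fun x => g (f x)) id m H ∧
        ∀ t ∈ Set.Icc (0:ℤ) (m:ℤ), H x₀ t = H x₀ 0) ∧
    (∃ m H, IsHomotopy lam lam (fun y => f (g y)) id m H ∧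
        ∀ t ∈ Set.Icc (0:ℤ) (m:ℤ), H y₀ t = H y₀ 0)

lemma prodDCont {v : ℕ} {X Y : Fin v → Type*}
    (κ : ∀ i, X i → X i → Prop) (lam : ∀ i, Y i → Y i → Prop)
    {f : ∀ i, X i → Y i} (hf : ∀ i, DContinuous (κ i) (lam i) (f i)) :
    DContinuous (NP κ) (NP lam) (fun p i => f i (p i)) := by
  intro p q hpq
  by_cases h : (fun i => f i (p i)) = (fun i => f i (q i))
  · exact Or.inl h
  · refine Or.inr ⟨h, fun i => ?_⟩
    rcases hpq.2 i with heq | hadj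
    · exact Or.inl (congrArg (f i) heq)
    · exact hf i _ _ hadj

lemma extendIsHomotopy {A B : Type*} {κ : A → A → Prop} {lam : B → B → Prop}
    {f g : A → B} {m : ℕ} {H : A → ℤ → B} (hH : IsHomotopy κ lam f g m H)
    {M : ℕ} (hm : m ≤ M) :
    IsHomotopy κ lam f g M (fun x t => H x (min t (m:ℤ))) := by
  obtain ⟨hf, hg, h0, hm', htime, hspace⟩ := hH
  have hmem : ∀ t ∈ Set.Icc (0:ℤ) (M:ℤ), min t (m:ℤ) ∈ Set.Icc (0:ℤ) (m:ℤ) := by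
    intro t ht
    exact ⟨le_min ht.1 (by positivity), min_le_right _ _⟩
  refine ⟨hf, hg, ?_, ?_, ?_, ?_⟩
  · intro x; show H x (min 0 (m:ℤ)) = f x
    rw [min_eq_left (by positivity)]; exact h0 x
  · intro x; show H x (min (M:ℤ) (m:ℤ)) = g x
    rw [min_eq_right (by exact_mod_cast hm)]; exact hm' x
  · intro x t ht t' ht' habs
    by_cases h : min t (m:ℤ) = min t' (m:ℤ)
    · exact Or.inl (congrArg (H x) h)
    · refine htime x _ (hmem t ht) _ (hmem t' ht') ?_
      rcases abs_eq (by norm_num : (0:ℤ) ≤ 1) |>.mp habs with h1 | h1 <;>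
        · rw [abs_eq (by norm_num : (0:ℤ) ≤ 1)]; omega
  · intro t ht x x' hadj
    exact hspace _ (hmem t ht) x x' hadj

lemma prodIsHomotopy {v : ℕ} {X Y : Fin v → Type*}
    {κ : ∀ i, X i → X i → Prop} {lam : ∀ i, Y i → Y i → Prop}
    {f g : ∀ i, X i → Y i} {m : ℕ} {H : ∀ i, X i → ℤ → Y i}
    (hH : ∀ i, IsHomotopy (κ i) (lam i) (f i) (g i) m (H i)) :
    IsHomotopy (NP κ) (NP lam) (fun p i => f i (p i)) (fun p i => g i (p i)) m
      (fun p t i => H i (p i) t) := by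
  refine ⟨prodDCont κ lam (fun i => (hH i).1), prodDCont κ lam (fun i => (hH i).2.1),
    ?_, ?_, ?_, ?_⟩
  · intro p; funext i; exact (hH i).2.2.1 (p i)
  · intro p; funext i; exact (hH i).2.2.2.1 (p i)
  · intro p t ht t' ht' habs
    by_cases h : (fun i => H i (p i) t) = (fun i => H i (p i) t')
    · exact Or.inl h
    · refine Or.inr ⟨h, fun i => ?_⟩
      exact (hH i).2.2.2.2.1 (p i) t ht t' ht' habs
  · intro t ht p q hpq
    by_cases h : (fun i => H i (p i) t) = (fun i => H i (q i) t)
    · exact Or.inl h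
    · refine Or.inr ⟨h, fun i => ?_⟩
      rcases hpq.2 i with heq | hadj
      · exact Or.inl (congrArg (fun a => H i a t) heq)
      · exact (hH i).2.2.2.2.2 t ht _ _ hadj

/-- If `X_i ≃ Y_i` for all `i`, then the products are homotopy equivalent
with the normal product adjacencies; and pointed homotopy equivalences yield a pointed
homotopy equivalence of the products with respect to the tuples. -/
theorem stmt6 (v : ℕ) (X Y : Fin v → Type*)
    (κ : ∀ i, X i → X i → Prop) (lam : ∀ i, Y i → Y i → Prop)
    (hκi : ∀ i x, ¬ κ i x x) (hκs : ∀ i x y, κ i x y → κ i y x)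
    (hli : ∀ i y, ¬ lam i y y) (hls : ∀ i y y', lam i y y' → lam i y' y) :
    ((∀ i, HtpyEquiv (κ i) (lam i)) → HtpyEquiv (NP κ) (NP lam)) ∧
    (∀ (x₀ : ∀ i, X i) (y₀ : ∀ i, Y i),
      (∀ i, PtdHtpyEquiv (κ i) (lam i) (x₀ i) (y₀ i)) →
      PtdHtpyEquiv (NP κ) (NP lam) x₀ y₀) := by
  constructor
  · intro h
    choose f g hf hg hgf hfg using h
    choose m H hH using hgf
    choose m' H' hH' using hfg
    refine ⟨fun p i => f i (p i), fun q i => g i (q i),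
      prodDCont κ lam hf, prodDCont lam κ hg, ?_, ?_⟩
    · exact ⟨Finset.univ.sup m, _, prodIsHomotopy (fun i =>
        extendIsHomotopy (hH i) (Finset.le_sup (Finset.mem_univ i)))⟩
    · exact ⟨Finset.univ.sup m', _, prodIsHomotopy (fun i =>
        extendIsHomotopy (hH' i) (Finset.le_sup (Finset.mem_univ i)))⟩
  · intro x₀ y₀ h
    choose f g hf hg hfx hgy hgf hfg using h
    choose m H hH hptd using hgf
    choose m' H' hH' hptd' using hfg
    refine ⟨fun p i => f i (p i), fun q i => g i (q i),
      prodDCont κ lam hf, prodDCont lam κ hg, funext hfx, funext hgy,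
      ⟨Finset.univ.sup m, fun p t i => H i (p i) (min t ((m i : ℕ) : ℤ)),
        prodIsHomotopy (fun i =>
          extendIsHomotopy (hH i) (Finset.le_sup (Finset.mem_univ i))), ?_⟩,
      ⟨Finset.univ.sup m', fun q t i => H' i (q i) (min t ((m' i : ℕ) : ℤ)),
        prodIsHomotopy (fun i =>
          extendIsHomotopy (hH' i) (Finset.le_sup (Finset.mem_univ i))), ?_⟩⟩
    · intro t ht
      funext i
      show H i (x₀ i) (min t ((m i : ℕ) : ℤ)) = H i (x₀ i) (min 0 ((m i : ℕ) : ℤ))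
      rw [min_eq_left (by positivity : (0:ℤ) ≤ ((m i : ℕ) : ℤ))]
      exact hptd i _ ⟨le_min ht.1 (by positivity), min_le_right _ _⟩
    · intro t ht
      funext i
      show H' i (y₀ i) (min t ((m' i : ℕ) : ℤ)) = H' i (y₀ i) (min 0 ((m' i : ℕ) : ℤ))
      rw [min_eq_left (by positivity : (0:ℤ) ≤ ((m' i : ℕ) : ℤ))]
      exact hptd' i _ ⟨le_min ht.1 (by positivity), min_le_right _ _⟩
end

section
/- Suppose (X_i,κ_i) and (Y_i,λ_i) are homotopically similar for 1≤i≤v. Then (Π_{i=1}^v X_i, NP_v(κ_1,…,κ_v)) and (Π_{i=1}^v Y_i, NP_v(λ_1,…,λ_v)) are homotopically similar. If the similarities X_i ≃^s Y_i are pointed at x_i ∈ X_i and y_i ∈ Y_i, then the similarity of the products is pointed at (x_1,…,x_v) and (y_1,…,y_v). -/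
/-- `(κ,λ)`-continuity of `f` regarded as a map on the subset `A ⊆ X`
(with the restricted adjacencies). -/
def DContinuousOn {X Y : Type*} (κ : X → X → Prop) (lam : Y → Y → Prop)
    (A : Set X) (f : X → Y) : Prop :=
  ∀ x ∈ A, ∀ x' ∈ A, κ x x' → f x = f x' ∨ lam (f x) (f x')

/-- `H` is a homotopy from `f` to `g`, regarded as maps from the subset `A ⊆ X` into the
subset `B ⊆ Y` (with the restricted adjacencies). -/
def IsHomotopyOn {X Y : Type*} (κ : X → X → Prop) (lam : Y → Y → Prop)
    (A : Set X) (B : Set Y) (f g : X → Y) (m : ℕ) (H : X → ℤ → Y) : Prop :=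
  DContinuousOn κ lam A f ∧ DContinuousOn κ lam A g ∧
  Set.MapsTo f A B ∧ Set.MapsTo g A B ∧
  (∀ x ∈ A, ∀ t ∈ Set.Icc (0:ℤ) (m:ℤ), H x t ∈ B) ∧
  (∀ x ∈ A, H x 0 = f x) ∧ (∀ x ∈ A, H x (m:ℤ) = g x) ∧
  (∀ x ∈ A, ∀ t ∈ Set.Icc (0:ℤ) (m:ℤ), ∀ t' ∈ Set.Icc (0:ℤ) (m:ℤ),
      |t - t'| = 1 → H x t = H x t' ∨ lam (H x t) (H x t')) ∧
  (∀ t ∈ Set.Icc (0:ℤ) (m:ℤ), ∀ x ∈ A, ∀ x' ∈ A,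
      κ x x' → H x t = H x' t ∨ lam (H x t) (H x' t))

/-- `f ≃ g` as maps `A → B`. -/
def HomotopicOn {X Y : Type*} (κ : X → X → Prop) (lam : Y → Y → Prop)
    (A : Set X) (B : Set Y) (f g : X → Y) : Prop :=
  ∃ m H, IsHomotopyOn κ lam A B f g m H

/-- `f ≃ g` as maps `A → B` via a homotopy that holds `x₀` fixed. -/
def PtdHomotopicOn {X Y : Type*} (κ : X → X → Prop) (lam : Y → Y → Prop)
    (A : Set X) (B : Set Y) (f g : X → Y) (x₀ : X) : Prop :=
  ∃ m H, IsHomotopyOn κ lam A B f g m H ∧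
    ∀ t ∈ Set.Icc (0:ℤ) (m:ℤ), H x₀ t = H x₀ 0

/-- `(X,κ)` and `(Y,λ)` are homotopically similar. -/
def HSimilar {X Y : Type*} (κ : X → X → Prop) (lam : Y → Y → Prop) : Prop :=
  ∃ (XS : ℕ → Set X) (YS : ℕ → Set Y) (f : ℕ → X → Y) (g : ℕ → Y → X),
    (⋃ j, XS j) = Set.univ ∧ (⋃ j, YS j) = Set.univ ∧
    (∀ j, XS j ⊆ XS (j+1)) ∧ (∀ j, YS j ⊆ YS (j+1)) ∧
    (∀ j, Set.MapsTo (f j) (XS j) (YS j)) ∧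
    (∀ j, Set.MapsTo (g j) (YS j) (XS j)) ∧
    (∀ j, DContinuousOn κ lam (XS j) (f j)) ∧
    (∀ j, DContinuousOn lam κ (YS j) (g j)) ∧
    (∀ j, HomotopicOn κ κ (XS j) (XS j) (fun x => g j (f j x)) id) ∧
    (∀ j, HomotopicOn lam lam (YS j) (YS j) (fun y => f j (g j y)) id) ∧
    (∀ m n, m ≤ n → HomotopicOn κ lam (XS m) (YS m) (f n) (f m)) ∧
    (∀ m n, m ≤ n → HomotopicOn lam κ (YS m) (XS m) (g n) (g m))

/-- `(X,x₀)` and `(Y,y₀)` are pointed homotopically similar: all the homotopies in the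
definition of homotopic similarity are pointed with respect to `x₀ ∈ X_1` and `y₀ ∈ Y_1`. -/
def HSimilarPtd {X Y : Type*} (κ : X → X → Prop) (lam : Y → Y → Prop)
    (x₀ : X) (y₀ : Y) : Prop :=
  ∃ (XS : ℕ → Set X) (YS : ℕ → Set Y) (f : ℕ → X → Y) (g : ℕ → Y → X),
    x₀ ∈ XS 0 ∧ y₀ ∈ YS 0 ∧
    (⋃ j, XS j) = Set.univ ∧ (⋃ j, YS j) = Set.univ ∧
    (∀ j, XS j ⊆ XS (j+1)) ∧ (∀ j, YS j ⊆ YS (j+1)) ∧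
    (∀ j, Set.MapsTo (f j) (XS j) (YS j)) ∧
    (∀ j, Set.MapsTo (g j) (YS j) (XS j)) ∧
    (∀ j, DContinuousOn κ lam (XS j) (f j)) ∧
    (∀ j, DContinuousOn lam κ (YS j) (g j)) ∧
    (∀ j, PtdHomotopicOn κ κ (XS j) (XS j) (fun x => g j (f j x)) id x₀) ∧
    (∀ j, PtdHomotopicOn lam lam (YS j) (YS j) (fun y => f j (g j y)) id y₀) ∧
    (∀ m n, m ≤ n → PtdHomotopicOn κ lam (XS m) (YS m) (f n) (f m) x₀) ∧
    (∀ m n, m ≤ n → PtdHomotopicOn lam κ (YS m) (XS m) (g n) (g m) y₀)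

private lemma subset_mono' {X : Type*} {S : ℕ → Set X} (h : ∀ j, S j ⊆ S (j+1)) :
    ∀ {m n : ℕ}, m ≤ n → S m ⊆ S n := by
  intro m n hmn
  induction hmn with
  | refl => exact subset_rfl
  | step _ ih => exact fun x hx => h _ (ih hx)

private lemma NP_dcont {v : ℕ} {X Y : Fin v → Type*} {κ : ∀ i, X i → X i → Prop}
    {lam : ∀ i, Y i → Y i → Prop} {A : ∀ i, Set (X i)} {f : ∀ i, X i → Y i}
    (hf : ∀ i, DContinuousOn (κ i) (lam i) (A i) (f i)) :
    DContinuousOn (NP κ) (NP lam) (Set.univ.pi A) (fun p i => f i (p i)) := by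
  rintro p hp q hq ⟨hne, hadj⟩
  by_cases h : (fun i => f i (p i)) = (fun i => f i (q i))
  · exact Or.inl h
  · refine Or.inr ⟨h, fun i => ?_⟩
    rcases hadj i with h' | h'
    · exact Or.inl (by show f i (p i) = f i (q i); rw [h'])
    · exact hf i (p i) (hp i trivial) (q i) (hq i trivial) h'

private lemma NP_homotopy {v : ℕ} {X Y : Fin v → Type*} {κ : ∀ i, X i → X i → Prop}
    {lam : ∀ i, Y i → Y i → Prop} {A : ∀ i, Set (X i)} {B : ∀ i, Set (Y i)}
    {f g : ∀ i, X i → Y i} (m : Fin v → ℕ) (H : ∀ i, X i → ℤ → Y i)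
    (hH : ∀ i, IsHomotopyOn (κ i) (lam i) (A i) (B i) (f i) (g i) (m i) (H i)) :
    IsHomotopyOn (NP κ) (NP lam) (Set.univ.pi A) (Set.univ.pi B)
      (fun p i => f i (p i)) (fun p i => g i (p i)) (Finset.univ.sup m)
      (fun p t i => H i (p i) (min t (m i))) := by
  set M := Finset.univ.sup m with hM
  have hm : ∀ i, m i ≤ M := fun i => Finset.le_sup (Finset.mem_univ i)
  have hmin : ∀ i, ∀ t ∈ Set.Icc (0:ℤ) (M:ℤ), min t ((m i):ℤ) ∈ Set.Icc (0:ℤ) ((m i):ℤ) := by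
    intro i t ⟨h0, h1⟩; constructor <;> omega
  refine ⟨NP_dcont (fun i => (hH i).1), NP_dcont (fun i => (hH i).2.1),
    fun p hp i _ => (hH i).2.2.1 (hp i trivial),
    fun p hp i _ => (hH i).2.2.2.1 (hp i trivial), ?_, ?_, ?_, ?_, ?_⟩
  · intro p hp t ht i _
    exact (hH i).2.2.2.2.1 (p i) (hp i trivial) _ (hmin i t ht)
  · intro p hp
    funext i
    show H i (p i) (min (0:ℤ) ((m i):ℤ)) = f i (p i)
    rw [min_eq_left (by positivity)]
    exact (hH i).2.2.2.2.2.1 (p i) (hp i trivial)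
  · intro p hp
    funext i
    show H i (p i) (min ((M:ℤ)) ((m i):ℤ)) = g i (p i)
    rw [min_eq_right (by exact_mod_cast hm i)]
    exact (hH i).2.2.2.2.2.2.1 (p i) (hp i trivial)
  · intro p hp t ht t' ht' habs
    by_cases h : (fun i => H i (p i) (min t (m i))) = (fun i => H i (p i) (min t' (m i)))
    · exact Or.inl h
    · refine Or.inr ⟨h, fun i => ?_⟩
      have hstep : min t ((m i):ℤ) = min t' ((m i):ℤ) ∨
          |min t ((m i):ℤ) - min t' ((m i):ℤ)| = 1 := by
        rw [abs_eq (by norm_num : (0:ℤ) ≤ 1)] at habs ⊢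
        omega
      rcases hstep with h' | h'
      · exact Or.inl (by show H i (p i) _ = H i (p i) _; rw [h'])
      · exact (hH i).2.2.2.2.2.2.2.1 (p i) (hp i trivial) _ (hmin i t ht) _ (hmin i t' ht') h'
  · rintro t ht p hp q hq ⟨hne, hadj⟩
    by_cases h : (fun i => H i (p i) (min t (m i))) = (fun i => H i (q i) (min t (m i)))
    · exact Or.inl h
    · refine Or.inr ⟨h, fun i => ?_⟩
      rcases hadj i with h' | h'
      · exact Or.inl (by show H i (p i) _ = H i (q i) _; rw [h'])
      · exact (hH i).2.2.2.2.2.2.2.2 _ (hmin i t ht) (p i) (hp i trivial) (q i)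
          (hq i trivial) h'

private lemma NP_homOn {v : ℕ} {X Y : Fin v → Type*} {κ : ∀ i, X i → X i → Prop}
    {lam : ∀ i, Y i → Y i → Prop} {A : ∀ i, Set (X i)} {B : ∀ i, Set (Y i)}
    {f g : ∀ i, X i → Y i}
    (h : ∀ i, HomotopicOn (κ i) (lam i) (A i) (B i) (f i) (g i)) :
    HomotopicOn (NP κ) (NP lam) (Set.univ.pi A) (Set.univ.pi B)
      (fun p i => f i (p i)) (fun p i => g i (p i)) := by
  choose m H hH using h
  exact ⟨_, _, NP_homotopy m H hH⟩

private lemma NP_ptdHomOn {v : ℕ} {X Y : Fin v → Type*} {κ : ∀ i, X i → X i → Prop}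
    {lam : ∀ i, Y i → Y i → Prop} {A : ∀ i, Set (X i)} {B : ∀ i, Set (Y i)}
    {f g : ∀ i, X i → Y i} {x₀ : ∀ i, X i}
    (h : ∀ i, PtdHomotopicOn (κ i) (lam i) (A i) (B i) (f i) (g i) (x₀ i)) :
    PtdHomotopicOn (NP κ) (NP lam) (Set.univ.pi A) (Set.univ.pi B)
      (fun p i => f i (p i)) (fun p i => g i (p i)) x₀ := by
  choose m H hH hpt using h
  refine ⟨_, _, NP_homotopy m H hH, ?_⟩
  intro t ht
  obtain ⟨h0, h1⟩ := ht
  funext i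
  show H i (x₀ i) (min t ((m i):ℤ)) = H i (x₀ i) (min 0 ((m i):ℤ))
  rw [min_eq_left (by positivity : (0:ℤ) ≤ ((m i):ℤ))]
  exact hpt i _ ⟨by omega, by omega⟩

private lemma NP_union {v : ℕ} {X : Fin v → Type*} {XS : ∀ i, ℕ → Set (X i)}
    (hXu : ∀ i, (⋃ j, XS i j) = Set.univ) (hXm : ∀ i, ∀ j, XS i j ⊆ XS i (j+1)) :
    (⋃ j, Set.univ.pi (fun i => XS i j)) = Set.univ := by
  rw [Set.eq_univ_iff_forall]
  intro p
  rw [Set.mem_iUnion]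
  have hj : ∀ i, ∃ j, p i ∈ XS i j := by
    intro i
    have : p i ∈ ⋃ j, XS i j := (hXu i) ▸ Set.mem_univ _
    exact Set.mem_iUnion.mp this
  choose j hj using hj
  exact ⟨Finset.univ.sup j,
    fun i _ => subset_mono' (hXm i) (Finset.le_sup (Finset.mem_univ i)) (hj i)⟩

/-- If `X_i ≃ˢ Y_i` for all `i`, then the products are homotopically similar
with the normal product adjacencies; pointed similarities yield a pointed similarity of
the products, pointed at the tuples. -/
theorem stmt7 (v : ℕ) (X Y : Fin v → Type*)
    (κ : ∀ i, X i → X i → Prop) (lam : ∀ i, Y i → Y i → Prop)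
    (hκi : ∀ i x, ¬ κ i x x) (hκs : ∀ i x y, κ i x y → κ i y x)
    (hli : ∀ i y, ¬ lam i y y) (hls : ∀ i y y', lam i y y' → lam i y' y) :
    ((∀ i, HSimilar (κ i) (lam i)) → HSimilar (NP κ) (NP lam)) ∧
    (∀ (x₀ : ∀ i, X i) (y₀ : ∀ i, Y i),
      (∀ i, HSimilarPtd (κ i) (lam i) (x₀ i) (y₀ i)) →
      HSimilarPtd (NP κ) (NP lam) x₀ y₀) := by
  constructor
  · intro hsim
    choose XS YS f g hXu hYu hXm hYm hfm hgm hfc hgc hgf hfg hfn hgn using hsim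
    exact ⟨fun j => Set.univ.pi (fun i => XS i j), fun j => Set.univ.pi (fun i => YS i j),
      fun j p i => f i j (p i), fun j q i => g i j (q i),
      NP_union hXu hXm, NP_union hYu hYm,
      fun j p hp i _ => hXm i j (hp i trivial),
      fun j q hq i _ => hYm i j (hq i trivial),
      fun j p hp i _ => hfm i j (hp i trivial),
      fun j q hq i _ => hgm i j (hq i trivial),
      fun j => NP_dcont (fun i => hfc i j),
      fun j => NP_dcont (fun i => hgc i j),
      fun j => NP_homOn (fun i => hgf i j),
      fun j => NP_homOn (fun i => hfg i j),
      fun m n hmn => NP_homOn (fun i => hfn i m n hmn),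
      fun m n hmn => NP_homOn (fun i => hgn i m n hmn)⟩
  · intro x₀ y₀ hsim
    choose XS YS f g hx0 hy0 hXu hYu hXm hYm hfm hgm hfc hgc hgf hfg hfn hgn using hsim
    exact ⟨fun j => Set.univ.pi (fun i => XS i j), fun j => Set.univ.pi (fun i => YS i j),
      fun j p i => f i j (p i), fun j q i => g i j (q i),
      fun i _ => hx0 i, fun i _ => hy0 i,
      NP_union hXu hXm, NP_union hYu hYm,
      fun j p hp i _ => hXm i j (hp i trivial),
      fun j q hq i _ => hYm i j (hq i trivial),
      fun j p hp i _ => hfm i j (hp i trivial),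
      fun j q hq i _ => hgm i j (hq i trivial),
      fun j => NP_dcont (fun i => hfc i j),
      fun j => NP_dcont (fun i => hgc i j),
      fun j => NP_ptdHomOn (fun i => hgf i j),
      fun j => NP_ptdHomOn (fun i => hfg i j),
      fun m n hmn => NP_ptdHomOn (fun i => hfn i m n hmn),
      fun m n hmn => NP_ptdHomOn (fun i => hgn i m n hmn)⟩
end

section
/- Let f_i,g_i : (X_i,κ_i) → (Y_i,λ_i) be continuous functions that are long homotopic, 1≤i≤v. Then the product maps f = Π_{i=1}^v f_i and g = Π_{i=1}^v g_i are long homotopic as maps from (Π X_i, NP_v(κ_1,…,κ_v)) to (Π Y_i, NP_v(λ_1,…,λ_v)). If the long homotopies f_i ≃^L g_i are pointed with respect to x_i ∈ X_i and y_i ∈ Y_i, then the long homotopy f ≃^L g is pointed with respect to (x_1,…,x_v) and (y_1,…,y_v). -/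
/-- `H : X × ℤ → Y` is a long homotopy from `f` to `g`. -/
def IsLongHomotopy {X Y : Type*} (κ : X → X → Prop) (lam : Y → Y → Prop)
    (f g : X → Y) (H : X → ℤ → Y) : Prop :=
  (∀ x, ∃ N : ℕ, (∀ t : ℤ, t ≤ -(N:ℤ) → H x t = f x) ∧
      (∀ t : ℤ, (N:ℤ) ≤ t → H x t = g x)) ∧
  (∀ x, ∀ t t' : ℤ, |t - t'| = 1 → H x t = H x t' ∨ lam (H x t) (H x t')) ∧
  (∀ t : ℤ, ∀ x x', κ x x' → H x t = H x' t ∨ lam (H x t) (H x' t))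

theorem prodLH (v : ℕ) (X Y : Fin v → Type*)
    (κ : ∀ i, X i → X i → Prop) (lam : ∀ i, Y i → Y i → Prop)
    (f g : ∀ i, X i → Y i)
    (H : ∀ i, X i → ℤ → Y i)
    (hH : ∀ i, IsLongHomotopy (κ i) (lam i) (f i) (g i) (H i)) :
    IsLongHomotopy (NP κ) (NP lam)
      (fun x i => f i (x i)) (fun x i => g i (x i))
      (fun x t i => H i (x i) t) := by
  refine ⟨?_, ?_, ?_⟩
  · intro x
    choose N h1 h2 using fun i => (hH i).1 (x i)
    refine ⟨Finset.univ.sup N, ?_, ?_⟩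
    · intro t ht
      funext i
      exact h1 i t (ht.trans (by
        have := Finset.le_sup (f := N) (Finset.mem_univ i)
        omega))
    · intro t ht
      funext i
      exact h2 i t (le_trans (by
        have := Finset.le_sup (f := N) (Finset.mem_univ i)
        omega) ht)
  · intro x t t' ht
    by_cases h : (fun i => H i (x i) t) = (fun i => H i (x i) t')
    · exact Or.inl h
    · exact Or.inr ⟨h, fun i => (hH i).2.1 (x i) t t' ht⟩
  · intro t x x' hxx'
    by_cases h : (fun i => H i (x i) t) = (fun i => H i (x' i) t)
    · exact Or.inl h
    · refine Or.inr ⟨h, fun i => ?_⟩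
      rcases hxx'.2 i with he | ha
      · exact Or.inl (by show H i (x i) t = H i (x' i) t; rw [he])
      · exact (hH i).2.2 t (x i) (x' i) ha

/-- If continuous `f_i, g_i` are long homotopic for each `i`, then the
product maps are long homotopic with respect to the normal product adjacencies; and if
the long homotopies are pointed with respect to `x_i, y_i` (i.e. `H_i (x_i) t = y_i` for
all `t`), then the product long homotopy may be taken pointed at the tuples. -/
theorem stmt8 (v : ℕ) (X Y : Fin v → Type*)
    (κ : ∀ i, X i → X i → Prop) (lam : ∀ i, Y i → Y i → Prop)
    (hκi : ∀ i x, ¬ κ i x x) (hκs : ∀ i x y, κ i x y → κ i y x)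
    (hli : ∀ i y, ¬ lam i y y) (hls : ∀ i y y', lam i y y' → lam i y' y)
    (f g : ∀ i, X i → Y i)
    (hf : ∀ i, DContinuous (κ i) (lam i) (f i))
    (hg : ∀ i, DContinuous (κ i) (lam i) (g i))
    (hL : ∀ i, ∃ H, IsLongHomotopy (κ i) (lam i) (f i) (g i) H) :
    (∃ K, IsLongHomotopy (NP κ) (NP lam)
        (fun x i => f i (x i)) (fun x i => g i (x i)) K) ∧
    (∀ (x₀ : ∀ i, X i) (y₀ : ∀ i, Y i),
      (∀ i, ∃ H, IsLongHomotopy (κ i) (lam i) (f i) (g i) H ∧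
          ∀ t : ℤ, H (x₀ i) t = y₀ i) →
      ∃ K, IsLongHomotopy (NP κ) (NP lam)
          (fun x i => f i (x i)) (fun x i => g i (x i)) K ∧
        ∀ t : ℤ, K x₀ t = y₀) := by
  constructor
  · choose H hH using hL
    exact ⟨_, prodLH v X Y κ lam f g H hH⟩
  · intro x₀ y₀ hp
    choose H hH hpt using hp
    refine ⟨_, prodLH v X Y κ lam f g H hH, fun t => funext fun i => hpt i t⟩
end

section
/- Suppose (X_i,κ_i) and (Y_i,λ_i) have the same long homotopy type for 1≤i≤v. Then (Π_{i=1}^v X_i, NP_v(κ_1,…,κ_v)) and (Π_{i=1}^v Y_i, NP_v(λ_1,…,λ_v)) have the same long homotopy type. If for each i the long homotopy equivalence X_i ≃^L Y_i is pointed with respect to x_i ∈ X_i and y_i ∈ Y_i, then the long homotopy equivalence of the products is pointed with respect to (x_1,…,x_v) and (y_1,…,y_v). -/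
/-- `(X,κ)` and `(Y,λ)` have the same long homotopy type. -/
def LongHtpyEquiv {X Y : Type*} (κ : X → X → Prop) (lam : Y → Y → Prop) : Prop :=
  ∃ (f : X → Y) (g : Y → X), DContinuous κ lam f ∧ DContinuous lam κ g ∧
    (∃ H, IsLongHomotopy κ κ (fun x => g (f x)) id H) ∧
    (∃ H, IsLongHomotopy lam lam (fun y => f (g y)) id H)

/-- Pointed long homotopy equivalence with respect to `x₀ ∈ X` and `y₀ ∈ Y`:
`f x₀ = y₀`, `g y₀ = x₀`, and the long homotopies hold `x₀`, respectively `y₀`, fixed. -/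
def PtdLongHtpyEquiv {X Y : Type*} (κ : X → X → Prop) (lam : Y → Y → Prop)
    (x₀ : X) (y₀ : Y) : Prop :=
  ∃ (f : X → Y) (g : Y → X), DContinuous κ lam f ∧ DContinuous lam κ g ∧
    f x₀ = y₀ ∧ g y₀ = x₀ ∧
    (∃ H, IsLongHomotopy κ κ (fun x => g (f x)) id H ∧ ∀ t : ℤ, H x₀ t = x₀) ∧
    (∃ H, IsLongHomotopy lam lam (fun y => f (g y)) id H ∧ ∀ t : ℤ, H y₀ t = y₀)

open Classical in
private lemma np_or {v : ℕ} {Y : Fin v → Type*} (lam : ∀ i, Y i → Y i → Prop)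
    (a b : ∀ i, Y i) (h : ∀ i, a i = b i ∨ lam i (a i) (b i)) :
    a = b ∨ NP lam a b := by
  by_cases hab : a = b
  · exact Or.inl hab
  · exact Or.inr ⟨hab, h⟩

private lemma dcont_prod {v : ℕ} {X Y : Fin v → Type*}
    (κ : ∀ i, X i → X i → Prop) (lam : ∀ i, Y i → Y i → Prop)
    (f : ∀ i, X i → Y i) (hf : ∀ i, DContinuous (κ i) (lam i) (f i)) :
    DContinuous (NP κ) (NP lam) (fun p i => f i (p i)) := by
  intro p q hpq
  refine np_or lam _ _ fun i => ?_
  rcases hpq.2 i with h | h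
  · exact Or.inl (by simp only [h])
  · exact hf i _ _ h

private lemma islong_prod {v : ℕ} {X : Fin v → Type*}
    (κ : ∀ i, X i → X i → Prop)
    (f g : ∀ i, X i → X i) (H : ∀ i, X i → ℤ → X i)
    (h : ∀ i, IsLongHomotopy (κ i) (κ i) (f i) (g i) (H i)) :
    IsLongHomotopy (NP κ) (NP κ) (fun p i => f i (p i)) (fun p i => g i (p i))
      (fun p t i => H i (p i) t) := by
  classical
  refine ⟨?_, ?_, ?_⟩
  · intro p
    choose N hN1 hN2 using fun i => (h i).1 (p i)
    refine ⟨Finset.univ.sup N, fun t ht => ?_, fun t ht => ?_⟩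
    · funext i
      exact hN1 i t (ht.trans (neg_le_neg (by
        exact_mod_cast Finset.le_sup (f := N) (Finset.mem_univ i))))
    · funext i
      exact hN2 i t (le_trans (by
        exact_mod_cast Finset.le_sup (f := N) (Finset.mem_univ i)) ht)
  · intro p t t' htt
    exact np_or κ _ _ fun i => (h i).2.1 (p i) t t' htt
  · intro t p q hpq
    refine np_or κ _ _ fun i => ?_
    rcases hpq.2 i with heq | hadj
    · exact Or.inl (by simp only [heq])
    · exact (h i).2.2 t _ _ hadj

/-- If `X_i ≃ᴸ Y_i` for all `i`, then the products have the same long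
homotopy type with the normal product adjacencies; pointed long homotopy equivalences
yield a pointed long homotopy equivalence of the products, pointed at the tuples. -/
theorem stmt9 (v : ℕ) (X Y : Fin v → Type*)
    (κ : ∀ i, X i → X i → Prop) (lam : ∀ i, Y i → Y i → Prop)
    (hκi : ∀ i x, ¬ κ i x x) (hκs : ∀ i x y, κ i x y → κ i y x)
    (hli : ∀ i y, ¬ lam i y y) (hls : ∀ i y y', lam i y y' → lam i y' y) :
    ((∀ i, LongHtpyEquiv (κ i) (lam i)) → LongHtpyEquiv (NP κ) (NP lam)) ∧
    (∀ (x₀ : ∀ i, X i) (y₀ : ∀ i, Y i),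
      (∀ i, PtdLongHtpyEquiv (κ i) (lam i) (x₀ i) (y₀ i)) →
      PtdLongHtpyEquiv (NP κ) (NP lam) x₀ y₀) := by

  classical
  constructor
  · intro h
    choose f g hf hg hX hY using h
    choose HX hHX using hX
    choose HY hHY using hY
    refine ⟨fun p i => f i (p i), fun q i => g i (q i),
      dcont_prod κ lam f hf, dcont_prod lam κ g hg,
      ⟨fun p t i => HX i (p i) t, islong_prod κ (fun i x => g i (f i x)) (fun i => id) HX hHX⟩,
      ⟨fun q t i => HY i (q i) t, islong_prod lam (fun i y => f i (g i y)) (fun i => id) HY hHY⟩⟩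
  · intro x₀ y₀ h
    choose f g hf hg hfx hgy hX hY using h
    choose HX hHX hX0 using hX
    choose HY hHY hY0 using hY
    refine ⟨fun p i => f i (p i), fun q i => g i (q i),
      dcont_prod κ lam f hf, dcont_prod lam κ g hg,
      funext hfx, funext hgy,
      ⟨fun p t i => HX i (p i) t, islong_prod κ (fun i x => g i (f i x)) (fun i => id) HX hHX,
        fun t => funext fun i => hX0 i t⟩,
      ⟨fun q t i => HY i (q i) t, islong_prod lam (fun i y => f i (g i y)) (fun i => id) HY hHY,
        fun t => funext fun i => hY0 i t⟩⟩
end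

section
/- Let p, q ∈ (X,κ) and let f : [a,b] → X be a real κ-path from p to q (i.e., a function on a closed real interval satisfying the real path conditions, with f(a)=p and f(b)=q). Then the number of jumps of f is finite. -/
/-- `f : [a,b] → X` is a real `κ`-path. -/
def IsRealPathOn {X : Type*} (κ : X → X → Prop) (a b : ℝ) (f : ℝ → X) : Prop :=
  (∃ ε > (0:ℝ), ∃ c : X, (∀ s ∈ Set.Ioo a (a + ε), f s = c) ∧ (c = f a ∨ κ c (f a))) ∧
  (∀ t ∈ Set.Ioo a b, ∃ ε > (0:ℝ), ∃ c₁ c₂ : X,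
      (∀ s ∈ Set.Ioo (t - ε) t, f s = c₁) ∧ (∀ s ∈ Set.Ioo t (t + ε), f s = c₂) ∧
      (c₁ = c₂ ∨ κ c₁ c₂) ∧ (c₁ = f t ∨ c₂ = f t)) ∧
  (∃ ε > (0:ℝ), ∃ c : X, (∀ s ∈ Set.Ioo (b - ε) b, f s = c) ∧ (c = f b ∨ κ c (f b)))

/-- `t` is a jump of `f : [a,b] → X`: at `t = a`, the constant value of `f` just after `a`
differs from `f a`; at an interior `t`, the constant values just before and just after `t`
differ; at `t = b`, the constant value just before `b` differs from `f b`. -/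
def IsJump {X : Type*} (a b : ℝ) (f : ℝ → X) (t : ℝ) : Prop :=
  (t = a ∧ ∃ ε > (0:ℝ), ∃ c : X, (∀ s ∈ Set.Ioo a (a + ε), f s = c) ∧ c ≠ f a) ∨
  (t ∈ Set.Ioo a b ∧ ∃ ε > (0:ℝ), ∃ c₁ c₂ : X,
      (∀ s ∈ Set.Ioo (t - ε) t, f s = c₁) ∧ (∀ s ∈ Set.Ioo t (t + ε), f s = c₂) ∧
      c₁ ≠ c₂) ∨
  (t = b ∧ ∃ ε > (0:ℝ), ∃ c : X, (∀ s ∈ Set.Ioo (b - ε) b, f s = c) ∧ c ≠ f b)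

lemma no_jump_of_const {X : Type*} {a b : ℝ} {f : ℝ → X} {u v : ℝ} {c : X}
    (hc : ∀ s ∈ Set.Ioo u v, f s = c) {s : ℝ} (hs : s ∈ Set.Ioo u v)
    (hsab : s ∈ Set.Ioo a b) : ¬ IsJump a b f s := by
  rintro (⟨rfl, _⟩ | ⟨_, ε, hε, c₁, c₂, h₁, h₂, hne⟩ | ⟨rfl, _⟩)
  · exact lt_irrefl _ hsab.1
  · apply hne
    obtain ⟨hus, hsv⟩ := hs
    have hmx : max u (s - ε) < s := max_lt hus (by linarith)
    set x := (max u (s - ε) + s) / 2 with hxdef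
    have hx1 : x ∈ Set.Ioo (s - ε) s :=
      ⟨by have := le_max_right u (s - ε); simp only [hxdef]; linarith,
       by simp only [hxdef]; linarith⟩
    have hx2 : x ∈ Set.Ioo u v :=
      ⟨by have := le_max_left u (s - ε); simp only [hxdef]; linarith,
       by simp only [hxdef]; linarith⟩
    have hmy : s < min v (s + ε) := lt_min hsv (by linarith)
    set y := (s + min v (s + ε)) / 2 with hydef
    have hy1 : y ∈ Set.Ioo s (s + ε) :=
      ⟨by simp only [hydef]; linarith,
       by have := min_le_right v (s + ε); simp only [hydef]; linarith⟩
    have hy2 : y ∈ Set.Ioo u v :=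
      ⟨by simp only [hydef]; linarith,
       by have := min_le_left v (s + ε); simp only [hydef]; linarith⟩
    calc c₁ = f x := (h₁ x hx1).symm
      _ = c := hc x hx2
      _ = f y := (hc y hy2).symm
      _ = c₂ := h₂ y hy1
  · exact lt_irrefl _ hsab.2

lemma jump_mem_Icc {X : Type*} {a b : ℝ} (hab : a < b) {f : ℝ → X} {t : ℝ}
    (ht : IsJump a b f t) : t ∈ Set.Icc a b := by
  rcases ht with ⟨rfl, _⟩ | ⟨h, _⟩ | ⟨rfl, _⟩
  · exact ⟨le_refl _, hab.le⟩
  · exact ⟨h.1.le, h.2.le⟩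
  · exact ⟨hab.le, le_refl _⟩

/-- a real `κ`-path `f : [a,b] → X` from `p` to `q` has only finitely many
jumps. -/
theorem stmt11 {X : Type*} (κ : X → X → Prop)
    (hκi : ∀ x, ¬ κ x x) (hκs : ∀ x x', κ x x' → κ x' x)
    (a b : ℝ) (hab : a < b) (p q : X) (f : ℝ → X)
    (hfa : f a = p) (hfb : f b = q)
    (hf : IsRealPathOn κ a b f) :
    {t : ℝ | IsJump a b f t}.Finite := by
  obtain ⟨ha, hmid, hb⟩ := hf
  -- local isolation of jumps
  have key : ∀ t ∈ Set.Icc a b, ∃ δ > (0:ℝ),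
      ∀ s, IsJump a b f s → |s - t| < δ → s = t := by
    intro t ht
    rcases eq_or_lt_of_le ht.1 with rfl | hat
    · -- t = a
      obtain ⟨ε, hε, c, hc, _⟩ := ha
      refine ⟨min ε (b - a), lt_min hε (by linarith), ?_⟩
      intro s hs hdist
      by_contra hne
      have h1 : |s - a| < ε := lt_of_lt_of_le hdist (min_le_left _ _)
      have h2 : |s - a| < b - a := lt_of_lt_of_le hdist (min_le_right _ _)
      have habs := abs_lt.mp h1
      have habs2 := abs_lt.mp h2
      have hsa : a ≤ s := (jump_mem_Icc hab hs).1
      have hsab : s ∈ Set.Ioo a b := ⟨lt_of_le_of_ne hsa (Ne.symm hne), by linarith⟩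
      have hsuv : s ∈ Set.Ioo a (a + ε) := ⟨hsab.1, by linarith⟩
      exact no_jump_of_const hc hsuv hsab hs
    rcases eq_or_lt_of_le ht.2 with rfl | htb
    · -- t = b
      obtain ⟨ε, hε, c, hc, _⟩ := hb
      refine ⟨min ε (t - a), lt_min hε (by linarith), ?_⟩
      intro s hs hdist
      by_contra hne
      have h1 : |s - t| < ε := lt_of_lt_of_le hdist (min_le_left _ _)
      have h2 : |s - t| < t - a := lt_of_lt_of_le hdist (min_le_right _ _)
      have habs := abs_lt.mp h1
      have habs2 := abs_lt.mp h2
      have hsb : s ≤ t := (jump_mem_Icc hab hs).2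
      have hsab : s ∈ Set.Ioo a t := ⟨by linarith, lt_of_le_of_ne hsb hne⟩
      have hsuv : s ∈ Set.Ioo (t - ε) t := ⟨by linarith, hsab.2⟩
      exact no_jump_of_const hc hsuv hsab hs
    · -- interior
      obtain ⟨ε, hε, c₁, c₂, h₁, h₂, _, _⟩ := hmid t ⟨hat, htb⟩
      refine ⟨min ε (min (t - a) (b - t)),
        lt_min hε (lt_min (by linarith) (by linarith)), ?_⟩
      intro s hs hdist
      by_contra hne
      have h1 : |s - t| < ε := lt_of_lt_of_le hdist (min_le_left _ _)
      have h2 : |s - t| < t - a :=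
        lt_of_lt_of_le hdist ((min_le_right _ _).trans (min_le_left _ _))
      have h3 : |s - t| < b - t :=
        lt_of_lt_of_le hdist ((min_le_right _ _).trans (min_le_right _ _))
      have habs := abs_lt.mp h1
      have habs2 := abs_lt.mp h2
      have habs3 := abs_lt.mp h3
      have hsab : s ∈ Set.Ioo a b := ⟨by linarith, by linarith⟩
      rcases lt_or_gt_of_ne hne with hlt | hgt
      · exact no_jump_of_const h₁ ⟨by linarith, hlt⟩ hsab hs
      · exact no_jump_of_const h₂ ⟨hgt, by linarith⟩ hsab hs
  classical
  choose! δ hδpos hδ using key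
  obtain ⟨T, hTmem, hTcov⟩ := isCompact_Icc.elim_nhds_subcover
    (fun t => Metric.ball t (δ t))
    (fun t ht => Metric.ball_mem_nhds _ (hδpos t ht))
  apply Set.Finite.subset T.finite_toSet
  intro s hs
  have hsIcc := jump_mem_Icc hab hs
  obtain ⟨x, hxT, hxball⟩ := Set.mem_iUnion₂.mp (hTcov hsIcc)
  have : s = x := hδ x (hTmem x hxT) s hs (by
    have := Metric.mem_ball.mp hxball
    rwa [Real.dist_eq] at this)
  simpa [this] using hxT
end

section
/- Let A_i ⊂ X_i be nonempty subsets of digital images (X_i,κ_i), 1≤i≤v. Then A_i is a retract of X_i for every i if and only if Π_{i=1}^v A_i is a retract of (Π_{i=1}^v X_i, NP_v(κ_1,…,κ_v)). -/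
/-- `A` is a retract of `(X,κ)`: there is a `(κ,κ)`-continuous `r : X → A`
with `r a = a` for all `a ∈ A`. -/
def IsRetract {X : Type*} (κ : X → X → Prop) (A : Set X) : Prop :=
  ∃ r : X → X, (∀ x, r x ∈ A) ∧ DContinuous κ κ r ∧ (∀ a ∈ A, r a = a)

/-- `A_i` is a retract of `X_i` for every `i` iff `Π A_i` is a retract of
`(Π X_i, NP_v(κ_1,…,κ_v))` (each `A_i` nonempty). -/
theorem stmt12 (v : ℕ) (X : Fin v → Type*)
    (κ : ∀ i, X i → X i → Prop)
    (hκi : ∀ i x, ¬ κ i x x) (hκs : ∀ i x y, κ i x y → κ i y x)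
    (A : ∀ i, Set (X i)) (hAne : ∀ i, (A i).Nonempty) :
    (∀ i, IsRetract (κ i) (A i)) ↔ IsRetract (NP κ) (Set.univ.pi A) := by
  constructor
  · intro h
    choose r hmem hcont hfix using h
    refine ⟨fun p i => r i (p i), fun p => Set.mem_univ_pi.2 fun i => hmem i (p i), ?_, ?_⟩
    · intro p q hpq
      by_cases he : (fun i => r i (p i)) = (fun i => r i (q i))
      · exact Or.inl he
      · refine Or.inr ⟨he, fun i => ?_⟩
        rcases hpq.2 i with h1 | h1
        · exact Or.inl (congrArg (r i) h1)
        · rcases hcont i (p i) (q i) h1 with h2 | h2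
          · exact Or.inl h2
          · exact Or.inr h2
    · intro a ha
      funext i
      exact hfix i (a i) (Set.mem_univ_pi.1 ha i)
  · rintro ⟨R, hmem, hcont, hfix⟩ i
    choose a ha using hAne
    let emb : X i → ∀ j, X j := fun x => Function.update a i x
    refine ⟨fun x => R (emb x) i, fun x => Set.mem_univ_pi.1 (hmem (emb x)) i, ?_, ?_⟩
    · intro x x' hxx
      have hne : x ≠ x' := fun h => hκi i x (h ▸ hxx)
      have hadj : NP κ (emb x) (emb x') := by
        constructor
        · intro h
          apply hne
          have := congrFun h i
          simpa [emb, Function.update_self] using this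
        · intro j
          by_cases hj : j = i
          · subst hj
            exact Or.inr (by simpa [emb, Function.update_self] using hxx)
          · exact Or.inl (by simp [emb, Function.update_of_ne hj])
      rcases hcont _ _ hadj with h | h
      · exact Or.inl (congrFun h i)
      · rcases h.2 i with h1 | h1
        · exact Or.inl h1
        · exact Or.inr h1
    · intro x hx
      have : emb x ∈ Set.univ.pi A := by
        refine Set.mem_univ_pi.2 fun j => ?_
        by_cases hj : j = i
        · subst hj; simpa [emb] using hx
        · simpa [emb, Function.update_of_ne hj] using ha j
      have := hfix _ this
      have := congrFun this i
      simpa [emb] using this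
end

section
/- Let A_i ⊂ X_i be nonempty subsets of digital images (X_i,κ_i), 1≤i≤v. Then A_i is a deformation retract of X_i for every i if and only if Π_{i=1}^v A_i is a deformation retract of (Π_{i=1}^v X_i, NP_v(κ_1,…,κ_v)); moreover the same equivalence holds with 'strong deformation retract' in place of 'deformation retract'. -/
/-- `A` is a deformation retract of `(X,κ)`: there is a `κ`-homotopy from the identity
`1_X` to a retraction of `X` onto `A`. -/
def IsDefRetract {X : Type*} (κ : X → X → Prop) (A : Set X) : Prop :=
  ∃ (r : X → X) (m : ℕ) (H : X → ℤ → X),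
    (∀ x, r x ∈ A) ∧ (∀ a ∈ A, r a = a) ∧ IsHomotopy κ κ id r m H

/-- `A` is a strong deformation retract of `(X,κ)`: additionally the homotopy holds every
point of `A` fixed. -/
def IsStrongDefRetract {X : Type*} (κ : X → X → Prop) (A : Set X) : Prop :=
  ∃ (r : X → X) (m : ℕ) (H : X → ℤ → X),
    (∀ x, r x ∈ A) ∧ (∀ a ∈ A, r a = a) ∧ IsHomotopy κ κ id r m H ∧
    (∀ a ∈ A, ∀ t ∈ Set.Icc (0:ℤ) (m:ℤ), H a t = a)

section Helpers
variable {v : ℕ} {X : Fin v → Type*} {κ : ∀ i, X i → X i → Prop}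

private lemma np_coord {p q : ∀ i, X i} (h : p = q ∨ NP κ p q) (i : Fin v) :
    p i = q i ∨ κ i (p i) (q i) := by
  rcases h with h | h
  · exact Or.inl (congrFun h i)
  · exact h.2 i

private lemma np_of_coords {p q : ∀ i, X i}
    (h : ∀ i, p i = q i ∨ κ i (p i) (q i)) : p = q ∨ NP κ p q := by
  by_cases hpq : p = q
  · exact Or.inl hpq
  · exact Or.inr ⟨hpq, h⟩

private lemma min_step (a b c : ℤ) (h : |a - b| = 1) :
    min a c = min b c ∨ |min a c - min b c| = 1 := by
  rw [abs_eq (by norm_num : (0:ℤ) ≤ 1)] at h ⊢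
  omega

/-- Forward construction: from per-factor data produce product data. -/
private lemma fwd_all {A : ∀ i, Set (X i)}
    (r : ∀ i, X i → X i) (m : ∀ i, ℕ) (H : ∀ i, X i → ℤ → X i)
    (hr : ∀ i x, r i x ∈ A i) (hra : ∀ i, ∀ a ∈ A i, r i a = a)
    (hH : ∀ i, IsHomotopy (κ i) (κ i) id (r i) (m i) (H i)) :
    (∀ p : ∀ i, X i, (fun i => r i (p i)) ∈ Set.univ.pi A) ∧
    (∀ a ∈ Set.univ.pi A, (fun i => r i (a i)) = a) ∧
    IsHomotopy (NP κ) (NP κ) id (fun p i => r i (p i)) (Finset.univ.sup m)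
      (fun p t i => H i (p i) (min t (m i))) ∧
    ((∀ i, ∀ a ∈ A i, ∀ t ∈ Set.Icc (0:ℤ) ((m i):ℤ), H i a t = a) →
      ∀ a ∈ Set.univ.pi A, ∀ t ∈ Set.Icc (0:ℤ) ((Finset.univ.sup m : ℕ):ℤ),
        (fun i => H i (a i) (min t (m i))) = a) := by
  have hmM : ∀ i, (m i : ℤ) ≤ ((Finset.univ.sup m : ℕ) : ℤ) := fun i =>
    Int.ofNat_le.mpr (Finset.le_sup (Finset.mem_univ i))
  have hmem : ∀ (i : Fin v) (t : ℤ), t ∈ Set.Icc (0:ℤ) ((Finset.univ.sup m : ℕ):ℤ) →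
      min t (m i) ∈ Set.Icc (0:ℤ) ((m i):ℤ) := by
    intro i t ht
    have := ht.1
    constructor <;> [exact le_min this (Int.ofNat_nonneg _); exact min_le_right _ _]
  refine ⟨?_, ?_, ⟨?_, ?_, ?_, ?_, ?_, ?_⟩, ?_⟩
  · intro p
    exact Set.mem_univ_pi.mpr fun i => hr i (p i)
  · intro a ha
    funext i
    exact hra i (a i) (ha i (Set.mem_univ i))
  · exact fun p q h => Or.inr h
  · intro p q hpq
    refine np_of_coords fun i => ?_
    rcases hpq.2 i with h | h
    · exact Or.inl (congrArg (r i) h)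
    · exact (hH i).2.1 _ _ h
  · intro p
    funext i
    have h0 : min (0:ℤ) (m i) = 0 := min_eq_left (Int.ofNat_nonneg _)
    show H i (p i) (min (0:ℤ) (m i)) = id p i
    rw [h0]
    exact (hH i).2.2.1 (p i)
  · intro p
    funext i
    have h0 : min ((Finset.univ.sup m : ℕ):ℤ) ((m i):ℤ) = (m i : ℤ) :=
      min_eq_right (hmM i)
    show H i (p i) (min (((Finset.univ.sup m : ℕ)):ℤ) ((m i):ℤ)) = r i (p i)
    rw [h0]
    exact (hH i).2.2.2.1 (p i)
  · intro p t ht t' ht' habs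
    refine np_of_coords fun i => ?_
    rcases min_step t t' (m i) habs with h | h
    · exact Or.inl (congrArg (H i (p i)) h)
    · exact (hH i).2.2.2.2.1 (p i) _ (hmem i t ht) _ (hmem i t' ht') h
  · intro t ht p q hpq
    refine np_of_coords fun i => ?_
    rcases hpq.2 i with h | h
    · exact Or.inl (congrArg (fun y => H i y (min t (m i))) h)
    · exact (hH i).2.2.2.2.2 _ (hmem i t ht) _ _ h
  · intro hfix a ha t ht
    funext i
    exact hfix i (a i) (ha i (Set.mem_univ i)) _ (hmem i t ht)

/-- Backward construction: from product data produce per-factor data. -/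
private lemma bwd_all (hκi : ∀ i x, ¬ κ i x x)
    {A : ∀ i, Set (X i)} (b : ∀ i, X i) (hb : ∀ i, b i ∈ A i)
    (r : (∀ i, X i) → ∀ i, X i) (m : ℕ) (H : (∀ i, X i) → ℤ → ∀ i, X i)
    (hr : ∀ p, r p ∈ Set.univ.pi A) (hra : ∀ a ∈ Set.univ.pi A, r a = a)
    (hH : IsHomotopy (NP κ) (NP κ) id r m H) (i : Fin v) :
    (∀ x, r (Function.update b i x) i ∈ A i) ∧
    (∀ a ∈ A i, r (Function.update b i a) i = a) ∧
    IsHomotopy (κ i) (κ i) id (fun x => r (Function.update b i x) i) m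
      (fun x t => H (Function.update b i x) t i) ∧
    ((∀ a ∈ Set.univ.pi A, ∀ t ∈ Set.Icc (0:ℤ) (m:ℤ), H a t = a) →
      ∀ a ∈ A i, ∀ t ∈ Set.Icc (0:ℤ) (m:ℤ), H (Function.update b i a) t i = a) := by
  obtain ⟨hc1, hc2, h0, hm, htc, hxc⟩ := hH
  have he_mem : ∀ x, x ∈ A i → Function.update b i x ∈ Set.univ.pi A := by
    intro x hx
    refine Set.mem_univ_pi.mpr fun j => ?_
    by_cases hj : j = i
    · subst hj; simpa using hx
    · simpa [Function.update_of_ne hj] using hb j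
  have he_adj : ∀ x x', κ i x x' →
      NP κ (Function.update b i x) (Function.update b i x') := by
    intro x x' h
    have hne : x ≠ x' := fun he => hκi i x (he ▸ h)
    refine ⟨fun he => hne ?_, fun j => ?_⟩
    · have := congrFun he i
      simpa using this
    · by_cases hj : j = i
      · subst hj; simpa using Or.inr h
      · exact Or.inl (by simp [Function.update_of_ne hj])
  refine ⟨?_, ?_, ⟨fun x x' h => Or.inr h, ?_, ?_, ?_, ?_, ?_⟩, ?_⟩
  · intro x
    exact Set.mem_univ_pi.mp (hr _) i
  · intro a ha
    have := congrFun (hra _ (he_mem a ha)) i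
    simpa using this
  · intro x x' h
    exact np_coord (hc2 _ _ (he_adj x x' h)) i
  · intro x
    have := congrFun (h0 (Function.update b i x)) i
    simpa using this
  · intro x
    exact congrFun (hm (Function.update b i x)) i
  · intro x t ht t' ht' habs
    exact np_coord (htc _ t ht t' ht' habs) i
  · intro t ht x x' h
    exact np_coord (hxc t ht _ _ (he_adj x x' h)) i
  · intro hfix a ha t ht
    have := congrFun (hfix _ (he_mem a ha) t ht) i
    simpa using this

end Helpers

/-- `A_i` is a (strong) deformation retract of `X_i` for every `i` iff
`Π A_i` is a (strong) deformation retract of `(Π X_i, NP_v(κ_1,…,κ_v))`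
(each `A_i` nonempty). -/
theorem stmt13 (v : ℕ) (X : Fin v → Type*)
    (κ : ∀ i, X i → X i → Prop)
    (hκi : ∀ i x, ¬ κ i x x) (hκs : ∀ i x y, κ i x y → κ i y x)
    (A : ∀ i, Set (X i)) (hAne : ∀ i, (A i).Nonempty) :
    ((∀ i, IsDefRetract (κ i) (A i)) ↔ IsDefRetract (NP κ) (Set.univ.pi A)) ∧
    ((∀ i, IsStrongDefRetract (κ i) (A i)) ↔
      IsStrongDefRetract (NP κ) (Set.univ.pi A)) := by
  choose b hb using hAne
  constructor
  · constructor
    · intro h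
      choose r m H hr hra hH using h
      obtain ⟨h1, h2, h3, _⟩ := fwd_all r m H hr hra hH
      exact ⟨_, _, _, h1, h2, h3⟩
    · rintro ⟨r, m, H, hr, hra, hH⟩ i
      obtain ⟨h1, h2, h3, _⟩ := bwd_all hκi b hb r m H hr hra hH i
      exact ⟨_, _, _, h1, h2, h3⟩
  · constructor
    · intro h
      choose r m H hr hra hH hfix using h
      obtain ⟨h1, h2, h3, h4⟩ := fwd_all r m H hr hra hH
      exact ⟨_, _, _, h1, h2, h3, h4 hfix⟩
    · rintro ⟨r, m, H, hr, hra, hH, hfix⟩ i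
      obtain ⟨h1, h2, h3, h4⟩ := bwd_all hκi b hb r m H hr hra hH i
      exact ⟨_, _, _, h1, h2, h3, h4 hfix⟩
end

section
/- Suppose v > 1; for 1≤i≤v, S_i ⊂ ℤ^{n_i+1} is nonempty and symmetric with respect to the origin of ℤ^{n_i+1}; κ_i is an adjacency on ℤ^{n_i+1} and λ_i is an adjacency on ℤ^{n_i}; m = Σ_{i=1}^v n_i; and Π_{i=1}^v S_i ⊂ ℤ^{m+v} has the (m, NP_v(κ_1,…,κ_v), NP_v(λ_1,…,λ_v))-Borsuk–Ulam property, where ℤ^m is identified with Π_{i=1}^v ℤ^{n_i} carrying the adjacency NP_v(λ_1,…,λ_v). Then, for every i, S_i has the (n_i, κ_i, λ_i)-Borsuk–Ulam property. -/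
/-- `S` has the `(κ,λ)`-Borsuk–Ulam property (into the codomain carrying `λ`):
every function that is `(κ,λ)`-continuous on `S` has a point `x ∈ S` with `f x` and
`f (-x)` equal or `λ`-adjacent. -/
def BUProperty {Z W : Type*} [Neg Z] (S : Set Z)
    (κ : Z → Z → Prop) (lam : W → W → Prop) : Prop :=
  ∀ f : Z → W,
    (∀ x ∈ S, ∀ x' ∈ S, κ x x' → f x = f x' ∨ lam (f x) (f x')) →
    ∃ x ∈ S, f x = f (-x) ∨ lam (f x) (f (-x))

/-- if `v > 1`, each `S_i ⊆ ℤ^{n_i+1}` is nonempty and symmetric with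
respect to the origin, and the product `Π S_i` has the
`(m, NP_v(κ_1,…,κ_v), NP_v(λ_1,…,λ_v))`-Borsuk–Ulam property (with `ℤ^m`, `m = Σ n_i`,
identified with `Π_i ℤ^{n_i}` carrying `NP_v(λ_1,…,λ_v)`), then every `S_i` has the
`(n_i, κ_i, λ_i)`-Borsuk–Ulam property. -/
theorem stmt14 (v : ℕ) (hv : 1 < v) (n : Fin v → ℕ)
    (S : ∀ i, Set (Fin (n i + 1) → ℤ))
    (κ : ∀ i, (Fin (n i + 1) → ℤ) → (Fin (n i + 1) → ℤ) → Prop)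
    (lam : ∀ i, (Fin (n i) → ℤ) → (Fin (n i) → ℤ) → Prop)
    (hκi : ∀ i x, ¬ κ i x x) (hκs : ∀ i x y, κ i x y → κ i y x)
    (hli : ∀ i y, ¬ lam i y y) (hls : ∀ i y y', lam i y y' → lam i y' y)
    (hSne : ∀ i, (S i).Nonempty)
    (hSsym : ∀ i, ∀ x ∈ S i, -x ∈ S i)
    (hBU : BUProperty (Set.univ.pi S) (NP κ) (NP lam)) :
    ∀ i, BUProperty (S i) (κ i) (lam i) := by
  intro i f hf
  classical
  set g : ∀ j, (Fin (n j + 1) → ℤ) → (Fin (n j) → ℤ) :=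
    Function.update (fun j (_ : Fin (n j + 1) → ℤ) (_ : Fin (n j)) => (0 : ℤ)) i f with hg
  have hgi : g i = f := by simp [hg]
  have hgj : ∀ j, j ≠ i → ∀ y, g j y = fun _ => (0 : ℤ) := by
    intro j hj y
    simp [hg, Function.update_of_ne hj]
  set F : (∀ j, Fin (n j + 1) → ℤ) → (∀ j, Fin (n j) → ℤ) :=
    fun x j => g j (x j) with hF
  have hcont : ∀ x ∈ Set.univ.pi S, ∀ x' ∈ Set.univ.pi S, NP κ x x' →
      F x = F x' ∨ NP lam (F x) (F x') := by
    intro x hx x' hx' hadj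
    by_cases heq : F x = F x'
    · exact Or.inl heq
    · refine Or.inr ⟨heq, fun j => ?_⟩
      by_cases hj : j = i
      · subst hj
        rcases hadj.2 j with h | h
        · exact Or.inl (by simp [hF, h])
        · have := hf (x j) (hx j trivial) (x' j) (hx' j trivial) h
          simpa [hF, hgi] using this
      · exact Or.inl (by rw [hF]; simp only []; rw [hgj j hj, hgj j hj])
  obtain ⟨x, hx, hcase⟩ := hBU F hcont
  refine ⟨x i, hx i trivial, ?_⟩
  have hneg : F (-x) i = f (-(x i)) := by
    simp [hF, hgi]
  rcases hcase with h | h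
  · left
    have := congrFun h i
    rw [hneg] at this
    simpa [hF, hgi] using this
  · rcases h.2 i with h' | h'
    · left
      rw [hneg] at h'
      simpa [hF, hgi] using h'
    · right
      rw [hneg] at h'
      simpa [hF, hgi] using h'
end

section
/- Let (X_i,κ_i) be nonempty digital images, 1≤i≤v, and let u be an integer with 1≤u≤v. If (Π_{i=1}^v X_i, NP_u(κ_1,…,κ_v)) has the approximate fixed point property, then (X_i,κ_i) has the approximate fixed point property for every i. -/
/-- `(X,κ)` has the approximate fixed point property (AFPP): every `(κ,κ)`-continuous
`f : X → X` has a point `x` with `f x` equal or `κ`-adjacent to `x`. -/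
def AFPP {X : Type*} (κ : X → X → Prop) : Prop :=
  ∀ f : X → X, DContinuous κ κ f → ∃ x, f x = x ∨ κ (f x) x

/-
A product of continuous self-maps of the factors is `NP_u`-continuous: by irreflexivity it
creates no adjacency in a coordinate where two points agree, so the number of adjacent
coordinates cannot grow beyond `u`. Taking `f` on `X_i` and identities elsewhere, an
approximate fixed point `p` of the product map gives the approximate fixed point `p i` of `f`.
-/

section

variable {v u : ℕ} {X : Fin v → Type*} {κ : ∀ i, X i → X i → Prop}

theorem NPu.eq_or_adj_apply {p q : ∀ i, X i} (h : NPu u κ p q) (j : Fin v) :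
    p j = q j ∨ κ j (p j) (q j) :=
  (em (κ j (p j) (q j))).elim Or.inr fun hj => Or.inl (h.2.2 j hj)

theorem DContinuous.pi_map (hκi : ∀ i x, ¬ κ i x x) {f : ∀ i, X i → X i}
    (hf : ∀ i, DContinuous (κ i) (κ i) (f i)) :
    DContinuous (NPu u κ) (NPu u κ) (Pi.map f) := by
  intro p q hpq
  have hcoord (j : Fin v) : f j (p j) = f j (q j) ∨ κ j (f j (p j)) (f j (q j)) := by
    rcases hpq.eq_or_adj_apply j with hj | hj
    · exact Or.inl (congrArg (f j) hj)
    · exact hf j _ _ hj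
  have hsub : {j | κ j (f j (p j)) (f j (q j))} ⊆ {j | κ j (p j) (q j)} := by
    intro j hj
    rcases hpq.eq_or_adj_apply j with heq | hadj
    · change κ j _ _ at hj
      rw [heq] at hj
      exact absurd hj (hκi j _)
    · exact hadj
  by_cases hne : {j | κ j (f j (p j)) (f j (q j))}.Nonempty
  · refine Or.inr ⟨(Set.ncard_pos (Set.toFinite _)).mpr hne,
      (Set.ncard_le_ncard hsub (Set.toFinite _)).trans hpq.2.1, fun j hj => ?_⟩
    exact (hcoord j).resolve_right hj
  · exact Or.inl (funext fun j => (hcoord j).resolve_right fun hj => hne ⟨j, hj⟩)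

end

theorem stmt15_general (v u : ℕ) (X : Fin v → Type*)
    (κ : ∀ i, X i → X i → Prop)
    (hκi : ∀ i x, ¬ κ i x x)
    (hAFPP : AFPP (NPu u κ)) :
    ∀ i, AFPP (κ i) := by
  classical
  intro i f hf
  set g : ∀ j, X j → X j := Function.update (fun _ => id) i f
  have hg : ∀ j, DContinuous (κ j) (κ j) (g j) := by
    intro j
    by_cases hji : j = i
    · subst hji
      simpa only [g, Function.update_self] using hf
    · simp only [g, Function.update_of_ne hji]
      exact fun x x' h => Or.inr h
  obtain ⟨p, hp⟩ := hAFPP (Pi.map g) (DContinuous.pi_map hκi hg)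
  have hpi : g i (p i) = p i ∨ κ i (g i (p i)) (p i) := by
    rcases hp with hfix | hadj
    · exact Or.inl (congrFun hfix i)
    · exact hadj.eq_or_adj_apply i
  exact ⟨p i, by simpa only [g, Function.update_self] using hpi⟩

/-- if `1 ≤ u ≤ v` and `(Π X_i, NP_u(κ_1,…,κ_v))` has the AFPP, then every
`(X_i,κ_i)` has the AFPP (each `X_i` nonempty). -/
theorem stmt15 (v u : ℕ) (hu1 : 1 ≤ u) (huv : u ≤ v) (X : Fin v → Type*)
    (κ : ∀ i, X i → X i → Prop)
    (hκi : ∀ i x, ¬ κ i x x) (hκs : ∀ i x y, κ i x y → κ i y x)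
    (hne : ∀ i, Nonempty (X i))
    (hAFPP : AFPP (NPu u κ)) :
    ∀ i, AFPP (κ i) :=
  stmt15_general v u X κ hκi hAFPP
end

section
/- Let (X_i,κ_i) be digital images with x_i ∈ X_i for 1≤i≤v, and let n ∈ ℕ. Then the radius-n neighborhood of (x_1,…,x_v) in (Π_{i=1}^v X_i, NP_v(κ_1,…,κ_v)) equals the Cartesian product of the radius-n neighborhoods: N*_{NP_v(κ_1,…,κ_v)}((x_1,…,x_v), n) = Π_{i=1}^v N*_{κ_i}(x_i, n). -/
/-- `N*_κ(x,n)`: the set of points reachable from `x` by a `κ`-path of length at most `n`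
(consecutive points equal or `κ`-adjacent). -/
def NStar {X : Type*} (κ : X → X → Prop) (x : X) (n : ℕ) : Set X :=
  {y | ∃ m ≤ n, ∃ c : ℕ → X, c 0 = x ∧ c m = y ∧
      ∀ j < m, c j = c (j + 1) ∨ κ (c j) (c (j + 1))}

theorem eq_or_NP_iff {v : ℕ} {X : Fin v → Type*} (κ : ∀ i, X i → X i → Prop)
    (p q : ∀ i, X i) : p = q ∨ NP κ p q ↔ ∀ i, p i = q i ∨ κ i (p i) (q i) := by
  refine ⟨?_, fun h => ?_⟩
  · rintro (rfl | ⟨-, h⟩)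
    · exact fun _ => Or.inl rfl
    · exact h
  · by_cases hpq : p = q
    · exact Or.inl hpq
    · exact Or.inr ⟨hpq, h⟩

/-- A path of length at most `n` extends to one of length exactly `n` by staying put. -/
theorem mem_NStar_iff_exists_path_length_eq {X : Type*} (κ : X → X → Prop) (x y : X) (n : ℕ) :
    y ∈ NStar κ x n ↔ ∃ c : ℕ → X, c 0 = x ∧ c n = y ∧
      ∀ j < n, c j = c (j + 1) ∨ κ (c j) (c (j + 1)) := by
  refine ⟨?_, fun ⟨c, h0, hn, hstep⟩ => ⟨n, le_rfl, c, h0, hn, hstep⟩⟩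
  rintro ⟨m, hm, c, h0, hmy, hstep⟩
  refine ⟨fun j => c (min j m), by simpa using h0, by simpa [min_eq_right hm] using hmy,
    fun j _ => ?_⟩
  rcases lt_or_ge j m with hj | hj
  · simpa only [min_eq_left hj.le, min_eq_left (Nat.succ_le_of_lt hj)] using hstep j hj
  · simp only [min_eq_right hj, min_eq_right (hj.trans j.le_succ), true_or]

theorem stmt16_general (v : ℕ) (X : Fin v → Type*)
    (κ : ∀ i, X i → X i → Prop)
    (x : ∀ i, X i) (n : ℕ) :
    NStar (NP κ) x n = Set.univ.pi (fun i => NStar (κ i) (x i) n) := by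
  ext y
  simp only [Set.mem_univ_pi, mem_NStar_iff_exists_path_length_eq, eq_or_NP_iff]
  constructor
  · rintro ⟨c, h0, hn, hstep⟩ i
    exact ⟨fun j => c j i, congrFun h0 i, congrFun hn i, fun j hj => hstep j hj i⟩
  · intro hy
    choose c h0 hn hstep using hy
    exact ⟨fun j i => c i j, funext h0, funext hn, fun j hj i => hstep i j hj⟩

/-- the radius-`n` neighborhood of `(x_1,…,x_v)` in
`(Π X_i, NP_v(κ_1,…,κ_v))` is the product of the radius-`n` neighborhoods
`N*_{κ_i}(x_i, n)`. -/
theorem stmt16 (v : ℕ) (X : Fin v → Type*)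
    (κ : ∀ i, X i → X i → Prop)
    (hκi : ∀ i x, ¬ κ i x x) (hκs : ∀ i x y, κ i x y → κ i y x)
    (x : ∀ i, X i) (n : ℕ) :
    NStar (NP κ) x n = Set.univ.pi (fun i => NStar (κ i) (x i) n) :=
  stmt16_general v X κ x n
end

section
/- Let F_i : (X_i,κ_i) ⊸ (Y_i,λ_i) be multivalued functions between digital images with each X_i nonempty, 1≤i≤v. Then the product multivalued function Π_{i=1}^v F_i : (Π X_i, NP_v(κ_1,…,κ_v)) ⊸ (Π Y_i, NP_v(λ_1,…,λ_v)) has weak continuity if and only if each F_i has weak continuity. -/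
/-- Two subsets of a digital image are adjacent: some point of one is equal or adjacent
to some point of the other. -/
def SetsAdjacent {Y : Type*} (lam : Y → Y → Prop) (A B : Set Y) : Prop :=
  ∃ a ∈ A, ∃ b ∈ B, a = b ∨ lam a b

/-- A multivalued function `F : X ⊸ Y` has weak continuity: images of adjacent points are
adjacent subsets. -/
def WeakContinuity {X Y : Type*} (κ : X → X → Prop) (lam : Y → Y → Prop)
    (F : X → Set Y) : Prop :=
  ∀ x x', κ x x' → SetsAdjacent lam (F x) (F x')

/-- the product multivalued function `Π F_i`, where
`(Π F_i)(x) = Π_i F_i(x_i)`, has weak continuity with respect to the normal product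
adjacencies iff each `F_i` has weak continuity. -/
theorem stmt17 (v : ℕ) (X Y : Fin v → Type*)
    (κ : ∀ i, X i → X i → Prop) (lam : ∀ i, Y i → Y i → Prop)
    (hκi : ∀ i x, ¬ κ i x x) (hκs : ∀ i x y, κ i x y → κ i y x)
    (hli : ∀ i y, ¬ lam i y y) (hls : ∀ i y y', lam i y y' → lam i y' y)
    (hne : ∀ i, Nonempty (X i))
    (F : ∀ i, X i → Set (Y i)) (hFne : ∀ i x, (F i x).Nonempty) :
    WeakContinuity (NP κ) (NP lam)
        (fun x => Set.univ.pi (fun i => F i (x i))) ↔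
      ∀ i, WeakContinuity (κ i) (lam i) (F i) := by

  classical
  constructor
  · intro h i x x' hxx'
    have hxne : x ≠ x' := fun he => hκi i x (he ▸ hxx')
    set base : ∀ j, X j := fun j => Classical.choice (hne j) with hbase
    set p : ∀ j, X j := Function.update base i x with hp
    set q : ∀ j, X j := Function.update base i x' with hq
    have hpi : p i = x := Function.update_self i x base
    have hqi : q i = x' := Function.update_self i x' base
    have hpq : NP κ p q := by
      constructor
      · intro he
        exact hxne (by rw [← hpi, ← hqi, he])
      · intro j
        by_cases hj : j = i
        · subst hj; right; rw [hpi, hqi]; exact hxx'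
        · left; rw [hp, hq, Function.update_of_ne hj, Function.update_of_ne hj]
    obtain ⟨a, ha, b, hb, hab⟩ := h p q hpq
    refine ⟨a i, ?_, b i, ?_, ?_⟩
    · simpa [hpi] using ha i (Set.mem_univ i)
    · simpa [hqi] using hb i (Set.mem_univ i)
    · rcases hab with he | hnp
      · exact Or.inl (congrFun he i)
      · exact hnp.2 i
  · intro h p q hpq
    have key : ∀ i, ∃ a ∈ F i (p i), ∃ b ∈ F i (q i), a = b ∨ lam i a b := by
      intro i
      rcases hpq.2 i with he | hk
      · obtain ⟨y, hy⟩ := hFne i (p i)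
        exact ⟨y, hy, y, he ▸ hy, Or.inl rfl⟩
      · exact h i (p i) (q i) hk
    choose a ha b hb hab using key
    refine ⟨a, fun j _ => ha j, b, fun j _ => hb j, ?_⟩
    by_cases heq : a = b
    · exact Or.inl heq
    · exact Or.inr ⟨heq, hab⟩
end

section
/- Let F_i : (X_i,κ_i) ⊸ (Y_i,λ_i) be multivalued functions between digital images with each X_i nonempty, 1≤i≤v. Then the product multivalued function Π_{i=1}^v F_i : (Π X_i, NP_v(κ_1,…,κ_v)) ⊸ (Π Y_i, NP_v(λ_1,…,λ_v)) has strong continuity if and only if each F_i has strong continuity. -/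
/-- A multivalued function `F : X ⊸ Y` has strong continuity: for adjacent `x, x'`, every
point of `F x` is equal or adjacent to some point of `F x'`, and vice versa. -/
def StrongContinuity {X Y : Type*} (κ : X → X → Prop) (lam : Y → Y → Prop)
    (F : X → Set Y) : Prop :=
  ∀ x x', κ x x' →
    (∀ y ∈ F x, ∃ y' ∈ F x', y = y' ∨ lam y y') ∧
    (∀ y' ∈ F x', ∃ y ∈ F x, y' = y ∨ lam y' y)

/-- the product multivalued function `Π F_i`, where
`(Π F_i)(x) = Π_i F_i(x_i)`, has strong continuity with respect to the normal product
adjacencies iff each `F_i` has strong continuity. -/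
theorem stmt18 (v : ℕ) (X Y : Fin v → Type*)
    (κ : ∀ i, X i → X i → Prop) (lam : ∀ i, Y i → Y i → Prop)
    (hκi : ∀ i x, ¬ κ i x x) (hκs : ∀ i x y, κ i x y → κ i y x)
    (hli : ∀ i y, ¬ lam i y y) (hls : ∀ i y y', lam i y y' → lam i y' y)
    (hne : ∀ i, Nonempty (X i))
    (F : ∀ i, X i → Set (Y i)) (hFne : ∀ i x, (F i x).Nonempty) :
    StrongContinuity (NP κ) (NP lam)
        (fun x => Set.univ.pi (fun i => F i (x i))) ↔
      ∀ i, StrongContinuity (κ i) (lam i) (F i) := by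
  classical
  constructor
  · intro H i x x' hxx'
    have hxne : x ≠ x' := fun h => hκi i x' (h ▸ hxx')
    set b : ∀ j, X j := fun j => (hne j).some with hb
    set p : ∀ j, X j := Function.update b i x with hp
    set p' : ∀ j, X j := Function.update b i x' with hp'
    have hpi : p i = x := Function.update_self i x b
    have hpi' : p' i = x' := Function.update_self i x' b
    have hpj : ∀ j, j ≠ i → p j = p' j := by
      intro j hj
      simp [hp, hp', Function.update_of_ne hj]
    have hadj : NP κ p p' := by
      refine ⟨fun h => hxne ?_, fun j => ?_⟩
      · have := congrFun h i
        rwa [hpi, hpi'] at this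
      · by_cases hj : j = i
        · subst hj; rw [hpi, hpi']; exact Or.inr hxx'
        · exact Or.inl (hpj j hj)
    have HP := H p p' hadj
    constructor
    · intro y hy
      choose g hg using fun j => hFne j (p j)
      set q : ∀ j, Y j := Function.update g i y with hq
      have hqmem : q ∈ Set.univ.pi (fun j => F j (p j)) := by
        intro j _
        by_cases hj : j = i
        · subst hj; simpa [hq, hpi] using hy
        · simpa [hq, Function.update_of_ne hj] using hg j
      obtain ⟨q', hq'mem, hqq'⟩ := HP.1 q hqmem
      refine ⟨q' i, by simpa [hpi'] using hq'mem i (Set.mem_univ i), ?_⟩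
      have hqi : q i = y := Function.update_self i y g
      rcases hqq' with h | ⟨_, h2⟩
      · exact Or.inl (by rw [← hqi, h])
      · rcases h2 i with h | h
        · exact Or.inl (by rw [← hqi, h])
        · exact Or.inr (by rwa [hqi] at h)
    · intro y' hy'
      choose g hg using fun j => hFne j (p' j)
      set q' : ∀ j, Y j := Function.update g i y' with hq'
      have hq'mem : q' ∈ Set.univ.pi (fun j => F j (p' j)) := by
        intro j _
        by_cases hj : j = i
        · subst hj; simpa [hq', hpi'] using hy'
        · simpa [hq', Function.update_of_ne hj] using hg j
      obtain ⟨q, hqmem, hqq'⟩ := HP.2 q' hq'mem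
      refine ⟨q i, by simpa [hpi] using hqmem i (Set.mem_univ i), ?_⟩
      have hqi : q' i = y' := Function.update_self i y' g
      rcases hqq' with h | ⟨_, h2⟩
      · exact Or.inl (by rw [← hqi, h])
      · rcases h2 i with h | h
        · exact Or.inl (by rw [← hqi, h])
        · exact Or.inr (by rwa [hqi] at h)
  · intro H x x' ⟨hne', hadj⟩
    constructor
    · intro y hy
      have : ∀ i, ∃ z ∈ F i (x' i), y i = z ∨ lam i (y i) z := by
        intro i
        rcases hadj i with h | h
        · exact ⟨y i, h ▸ hy i (Set.mem_univ i), Or.inl rfl⟩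
        · exact (H i (x i) (x' i) h).1 (y i) (hy i (Set.mem_univ i))
      choose y' hy'mem hy'rel using this
      refine ⟨y', fun i _ => hy'mem i, ?_⟩
      by_cases hyy : y = y'
      · exact Or.inl hyy
      · exact Or.inr ⟨hyy, hy'rel⟩
    · intro y' hy'
      have : ∀ i, ∃ z ∈ F i (x i), y' i = z ∨ lam i (y' i) z := by
        intro i
        rcases hadj i with h | h
        · exact ⟨y' i, h ▸ hy' i (Set.mem_univ i), Or.inl rfl⟩
        · exact (H i (x i) (x' i) h).2 (y' i) (hy' i (Set.mem_univ i))
      choose y hymem hyrel using this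
      refine ⟨y, fun i _ => hymem i, ?_⟩
      by_cases hyy : y' = y
      · exact Or.inl hyy
      · exact Or.inr ⟨hyy, hyrel⟩
end

section
/- Let F_i : (X_i,κ_i) ⊸ (Y_i,λ_i) be multivalued functions between digital images with each X_i nonempty, 1≤i≤v. Then the product multivalued function Π_{i=1}^v F_i : (Π X_i, NP_v(κ_1,…,κ_v)) ⊸ (Π Y_i, NP_v(λ_1,…,λ_v)) is connectivity preserving if and only if each F_i is connectivity preserving. -/
/-- A subset `A` of a digital image `(X,κ)` is connected: any two of its points are
joined by a sequence in `A` of consecutively `κ`-adjacent points. -/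
def ConnSet {X : Type*} (κ : X → X → Prop) (A : Set X) : Prop :=
  ∀ a ∈ A, ∀ b ∈ A, ∃ (m : ℕ) (c : ℕ → X),
    (∀ j ≤ m, c j ∈ A) ∧ c 0 = a ∧ c m = b ∧ ∀ j < m, κ (c j) (c (j + 1))

/-- A multivalued function `F : X ⊸ Y` is connectivity preserving:
`F(A) = ⋃_{x ∈ A} F x` is connected whenever `A` is connected. -/
def ConnPreserving {X Y : Type*} (κ : X → X → Prop) (lam : Y → Y → Prop)
    (F : X → Set Y) : Prop :=
  ∀ A : Set X, ConnSet κ A → ConnSet lam (⋃ x ∈ A, F x)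

/-- `a` and `b` are joined by a path inside `B`. -/
def DJoined {X : Type*} (κ : X → X → Prop) (B : Set X) (a b : X) : Prop :=
  ∃ (m : ℕ) (c : ℕ → X),
    (∀ j ≤ m, c j ∈ B) ∧ c 0 = a ∧ c m = b ∧ ∀ j < m, κ (c j) (c (j + 1))

lemma connSet_iff {X : Type*} (κ : X → X → Prop) (A : Set X) :
    ConnSet κ A ↔ ∀ a ∈ A, ∀ b ∈ A, DJoined κ A a b := Iff.rfl

lemma joined_refl {X : Type*} {κ : X → X → Prop} {B : Set X} {a : X} (ha : a ∈ B) :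
    DJoined κ B a a :=
  ⟨0, fun _ => a, fun _ _ => ha, rfl, rfl, fun j hj => absurd hj (Nat.not_lt_zero j)⟩

lemma joined_mono {X : Type*} {κ : X → X → Prop} {B B' : Set X} {a b : X}
    (h : B ⊆ B') (hj : DJoined κ B a b) : DJoined κ B' a b := by
  obtain ⟨m, c, hmem, h0, hm, hs⟩ := hj
  exact ⟨m, c, fun j hj => h (hmem j hj), h0, hm, hs⟩

lemma joined_single {X : Type*} {κ : X → X → Prop} {B : Set X} {a b : X}
    (ha : a ∈ B) (hb : b ∈ B) (hab : κ a b) : DJoined κ B a b := by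
  refine ⟨1, fun j => if j = 0 then a else b, ?_, ?_, ?_, ?_⟩
  · intro j _; by_cases h : j = 0 <;> simp [h, ha, hb]
  · simp
  · simp
  · intro j hj
    have : j = 0 := by omega
    simp [this, hab]

lemma joined_trans {X : Type*} {κ : X → X → Prop} {B : Set X} {a b d : X}
    (h1 : DJoined κ B a b) (h2 : DJoined κ B b d) : DJoined κ B a d := by
  obtain ⟨m1, c1, hmem1, h01, hm1, hs1⟩ := h1
  obtain ⟨m2, c2, hmem2, h02, hm2, hs2⟩ := h2
  have key : ∀ j, m1 ≤ j → (if j ≤ m1 then c1 j else c2 (j - m1)) = c2 (j - m1) := by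
    intro j hj
    by_cases h : j ≤ m1
    · have hje : j = m1 := le_antisymm h hj
      subst hje
      simp [hm1, ← h02]
    · rw [if_neg h]
  refine ⟨m1 + m2, fun j => if j ≤ m1 then c1 j else c2 (j - m1), ?_, ?_, ?_, ?_⟩
  · intro j hj
    beta_reduce
    by_cases h : j ≤ m1
    · rw [if_pos h]; exact hmem1 j h
    · rw [if_neg h]; exact hmem2 (j - m1) (by omega)
  · simp [h01]
  · beta_reduce
    by_cases h : m1 + m2 ≤ m1
    · have hm2z : m2 = 0 := by omega
      rw [if_pos h]
      have he : m1 + m2 = m1 := by omega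
      rw [he, hm1, ← h02]
      exact hm2z ▸ hm2
    · rw [if_neg h]
      have he : m1 + m2 - m1 = m2 := by omega
      rw [he, hm2]
  · intro j hj
    beta_reduce
    by_cases h : j + 1 ≤ m1
    · rw [if_pos h, if_pos (by omega : j ≤ m1)]
      exact hs1 j (by omega)
    · have hm1j : m1 ≤ j := by omega
      rw [key j hm1j, key (j+1) (by omega)]
      have he : j + 1 - m1 = (j - m1) + 1 := by omega
      rw [he]
      exact hs2 (j - m1) (by omega)

/-- A "weak" path (each step equal or adjacent) joins its endpoints. -/
lemma joined_weak {X : Type*} {κ : X → X → Prop} {B : Set X} (c : ℕ → X) :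
    ∀ m : ℕ, (∀ j ≤ m, c j ∈ B) → (∀ j < m, c j = c (j+1) ∨ κ (c j) (c (j+1))) →
      DJoined κ B (c 0) (c m) := by
  intro m
  induction m with
  | zero => intro hmem _; exact joined_refl (hmem 0 le_rfl)
  | succ m ih =>
    intro hmem hstep
    have h1 : DJoined κ B (c 0) (c m) :=
      ih (fun j hj => hmem j (by omega)) (fun j hj => hstep j (by omega))
    rcases hstep m (by omega) with he | hk
    · rwa [← he]
    · exact joined_trans h1 (joined_single (hmem m (by omega)) (hmem (m+1) le_rfl) hk)

/-- A product of coordinatewise-joined points is NP-joined in the product set. -/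
lemma prod_joined {v : ℕ} {Y : Fin v → Type*} (lam : ∀ i, Y i → Y i → Prop)
    (hli : ∀ i y, ¬ lam i y y) (S : ∀ i, Set (Y i)) (y y' : ∀ i, Y i)
    (h : ∀ i, DJoined (lam i) (S i) (y i) (y' i)) :
    DJoined (NP lam) (Set.univ.pi S) y y' := by
  choose m p hmem h0 hm hstep using h
  set M := Finset.univ.sup m with hM
  have hle : ∀ i, m i ≤ M := fun i => Finset.le_sup (Finset.mem_univ i)
  refine ⟨M, fun j i => p i (min j (m i)), ?_, ?_, ?_, ?_⟩
  · intro j _ i _; exact hmem i _ (min_le_right _ _)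
  · funext i; simpa using h0 i
  · funext i; beta_reduce; rw [min_eq_right (hle i)]; exact hm i
  · intro j hj
    obtain ⟨i0, -, hi0⟩ := Finset.lt_sup_iff.mp hj
    constructor
    · intro he
      have he' := congrFun he i0
      beta_reduce at he'
      rw [min_eq_left (by omega), min_eq_left (by omega)] at he'
      have := hstep i0 j hi0
      rw [he'] at this
      exact hli i0 _ this
    · intro i
      beta_reduce
      by_cases hcase : j < m i
      · right
        rw [min_eq_left (by omega), min_eq_left (by omega)]
        exact hstep i j hcase
      · left
        rw [min_eq_right (by omega), min_eq_right (by omega)]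

/-- If `S ∪ T` is connected and both are nonempty, there are points `a ∈ S`, `b ∈ T`
which are equal or adjacent. -/
lemma crossing {Y : Type*} {lam : Y → Y → Prop} {S T : Set Y}
    (hconn : ConnSet lam (S ∪ T)) (hs : S.Nonempty) (ht : T.Nonempty) :
    ∃ a ∈ S, ∃ b ∈ T, a = b ∨ lam a b := by
  classical
  obtain ⟨s, hsS⟩ := hs
  obtain ⟨t, htT⟩ := ht
  obtain ⟨m, c, hmem, h0, hm, hstep⟩ := hconn s (Or.inl hsS) t (Or.inr htT)
  set k := Nat.findGreatest (fun j => c j ∈ S) m with hk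
  have hkS : c k ∈ S := Nat.findGreatest_spec (P := fun j => c j ∈ S) (Nat.zero_le m) (show c 0 ∈ S from h0.symm ▸ hsS)
  have hkm : k ≤ m := Nat.findGreatest_le m
  by_cases hkeq : k = m
  · exact ⟨c k, hkS, c k, by rw [hkeq, hm]; exact htT, Or.inl rfl⟩
  · have hklt : k < m := lt_of_le_of_ne hkm hkeq
    have hnext : c (k+1) ∉ S :=
      Nat.findGreatest_is_greatest (Nat.lt_succ_self k) (by omega)
    have hmemT : c (k+1) ∈ T := by
      rcases hmem (k+1) (by omega) with h | h
      · exact absurd h hnext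
      · exact h
    exact ⟨c k, hkS, c (k+1), hmemT, Or.inr (hstep k hklt)⟩

lemma singleton_conn {X : Type*} (κ : X → X → Prop) (x : X) :
    ConnSet κ ({x} : Set X) := by
  intro a ha b hb
  rw [Set.mem_singleton_iff] at ha hb
  subst ha; subst hb
  exact joined_refl rfl

lemma pair_conn {X : Type*} {κ : X → X → Prop} (hs : ∀ x y, κ x y → κ y x)
    (x x' : X) (h : x = x' ∨ κ x x') : ConnSet κ ({x, x'} : Set X) := by
  intro a ha b hb
  have hxmem : x ∈ ({x, x'} : Set X) := Or.inl rfl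
  have hx'mem : x' ∈ ({x, x'} : Set X) := Or.inr rfl
  rcases ha with rfl | ha <;> rcases hb with rfl | hb
  · exact joined_refl hxmem
  · rw [Set.mem_singleton_iff] at hb; subst hb
    rcases h with rfl | hk
    · exact joined_refl hxmem
    · exact joined_single hxmem hx'mem hk
  · rw [Set.mem_singleton_iff] at ha; subst ha
    rcases h with rfl | hk
    · exact joined_refl hxmem
    · exact joined_single hx'mem hxmem (hs _ _ hk)
  · rw [Set.mem_singleton_iff] at ha hb; subst ha; subst hb
    exact joined_refl hx'mem

/-- the product multivalued function `Π F_i`, where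
`(Π F_i)(x) = Π_i F_i(x_i)`, is connectivity preserving with respect to the normal
product adjacencies iff each `F_i` is connectivity preserving. -/
theorem stmt19 (v : ℕ) (X Y : Fin v → Type*)
    (κ : ∀ i, X i → X i → Prop) (lam : ∀ i, Y i → Y i → Prop)
    (hκi : ∀ i x, ¬ κ i x x) (hκs : ∀ i x y, κ i x y → κ i y x)
    (hli : ∀ i y, ¬ lam i y y) (hls : ∀ i y y', lam i y y' → lam i y' y)
    (hne : ∀ i, Nonempty (X i))
    (F : ∀ i, X i → Set (Y i)) (hFne : ∀ i x, (F i x).Nonempty) :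
    ConnPreserving (NP κ) (NP lam)
        (fun x => Set.univ.pi (fun i => F i (x i))) ↔
      ∀ i, ConnPreserving (κ i) (lam i) (F i) := by
  classical
  constructor
  · -- forward
    intro hP i0 A hA
    intro a ha b hb
    have x0 : ∀ i, X i := fun i => Classical.choice (hne i)
    have y0mem : ∀ i, ∃ z, z ∈ F i (x0 i) := fun i => hFne i (x0 i)
    choose y0 hy0 using y0mem
    set A' : Set (∀ i, X i) := (fun t => Function.update x0 i0 t) '' A with hA'def
    have hA' : ConnSet (NP κ) A' := by
      rintro p ⟨ta, hta, rfl⟩ q ⟨tb, htb, rfl⟩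
      obtain ⟨m, c, hmem, h0, hm, hstep⟩ := hA ta hta tb htb
      refine ⟨m, fun j => Function.update x0 i0 (c j), ?_, ?_, ?_, ?_⟩
      · intro j hj; exact ⟨c j, hmem j hj, rfl⟩
      · show Function.update x0 i0 (c 0) = Function.update x0 i0 ta
        rw [h0]
      · show Function.update x0 i0 (c m) = Function.update x0 i0 tb
        rw [hm]
      · intro j hj
        constructor
        · intro he
          have := congrFun he i0
          simp only [Function.update_self] at this
          exact hκi i0 _ (this ▸ hstep j hj)
        · intro i
          by_cases hi : i = i0
          · subst hi
            right
            simp only [Function.update_self]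
            exact hstep j hj
          · left
            simp [Function.update_of_ne hi]
    have hU := hP A' hA'
    obtain ⟨xa, hxa, haF⟩ := Set.mem_iUnion₂.mp ha
    obtain ⟨xb, hxb, hbF⟩ := Set.mem_iUnion₂.mp hb
    set ya : ∀ i, Y i := Function.update y0 i0 a with hya
    set yb : ∀ i, Y i := Function.update y0 i0 b with hyb
    have hyamem : ya ∈ ⋃ x ∈ A', Set.univ.pi (fun i => F i (x i)) := by
      refine Set.mem_iUnion₂.mpr ⟨Function.update x0 i0 xa, ⟨xa, hxa, rfl⟩, ?_⟩
      intro i _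
      by_cases hi : i = i0
      · subst hi; simp only [Function.update_self, hya]; exact haF
      · simp only [hya, Function.update_of_ne hi]; exact hy0 i
    have hybmem : yb ∈ ⋃ x ∈ A', Set.univ.pi (fun i => F i (x i)) := by
      refine Set.mem_iUnion₂.mpr ⟨Function.update x0 i0 xb, ⟨xb, hxb, rfl⟩, ?_⟩
      intro i _
      by_cases hi : i = i0
      · subst hi; simp only [Function.update_self, hyb]; exact hbF
      · simp only [hyb, Function.update_of_ne hi]; exact hy0 i
    obtain ⟨m, c, hmem, h0, hm, hstep⟩ := hU ya hyamem yb hybmem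
    have hmem' : ∀ j ≤ m, c j i0 ∈ ⋃ t ∈ A, F i0 t := by
      intro j hj
      obtain ⟨x, hx, hcj⟩ := Set.mem_iUnion₂.mp (hmem j hj)
      obtain ⟨t, htA, rfl⟩ := hx
      refine Set.mem_iUnion₂.mpr ⟨t, htA, ?_⟩
      have := hcj i0 (Set.mem_univ i0)
      simpa [Function.update_self] using this
    have hstep' : ∀ j < m, c j i0 = c (j+1) i0 ∨ lam i0 (c j i0) (c (j+1) i0) :=
      fun j hj => (hstep j hj).2 i0
    have hweak : DJoined (lam i0) (⋃ t ∈ A, F i0 t) (c 0 i0) (c m i0) :=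
      joined_weak (fun j => c j i0) m hmem' hstep'
    have hea : c 0 i0 = a := by rw [h0, hya, Function.update_self]
    have heb : c m i0 = b := by rw [hm, hyb, Function.update_self]
    rw [hea, heb] at hweak
    exact hweak
  · -- backward
    intro h A hA
    intro y hy y' hy'
    set U : Set (∀ i, Y i) := ⋃ x ∈ A, Set.univ.pi (fun i => F i (x i)) with hUdef
    show DJoined (NP lam) U y y'
    obtain ⟨xa, hxa, hyx⟩ := Set.mem_iUnion₂.mp hy
    obtain ⟨xb, hxb, hy'x⟩ := Set.mem_iUnion₂.mp hy'
    obtain ⟨m, c, hmem, h0, hm, hstep⟩ := hA xa hxa xb hxb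
    have Fconn : ∀ i (t : X i), ConnSet (lam i) (F i t) := by
      intro i t
      have := h i {t} (singleton_conn (κ i) t)
      rwa [Set.biUnion_singleton] at this
    have key : ∀ x ∈ A, ∀ z ∈ Set.univ.pi (fun i => F i (x i)),
        ∀ w ∈ Set.univ.pi (fun i => F i (x i)), DJoined (NP lam) U z w := by
      intro x hx z hz w hw
      apply joined_mono (show Set.univ.pi (fun i => F i (x i)) ⊆ U from
        fun u hu => Set.mem_iUnion₂.mpr ⟨x, hx, hu⟩)
      exact prod_joined lam hli _ z w
        (fun i => Fconn i (x i) (z i) (hz i (Set.mem_univ i)) (w i) (hw i (Set.mem_univ i)))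
    have main : ∀ j ≤ m, ∃ z ∈ Set.univ.pi (fun i => F i (c j i)), DJoined (NP lam) U y z := by
      intro j
      induction j with
      | zero =>
        intro _
        refine ⟨y, ?_, joined_refl (Set.mem_iUnion₂.mpr ⟨xa, hxa, hyx⟩)⟩
        rw [h0]; exact hyx
      | succ j ih =>
        intro hj
        obtain ⟨z, hz, hjoin⟩ := ih (by omega)
        have hstepj := hstep j (by omega)
        have hcross : ∀ i, ∃ p ∈ F i (c j i), ∃ q ∈ F i (c (j+1) i), p = q ∨ lam i p q := by
          intro i
          have hpair : ConnSet (κ i) {c j i, c (j+1) i} :=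
            pair_conn (hκs i) _ _ (hstepj.2 i)
          have hc := h i _ hpair
          rw [Set.biUnion_pair] at hc
          exact crossing hc (hFne i _) (hFne i _)
        choose p hp q hq hpq using hcross
        have hpmem : p ∈ Set.univ.pi (fun i => F i (c j i)) := fun i _ => hp i
        have hqmem : q ∈ Set.univ.pi (fun i => F i (c (j+1) i)) := fun i _ => hq i
        have hzp : DJoined (NP lam) U z p := key (c j) (hmem j (by omega)) z hz p hpmem
        have hpq' : DJoined (NP lam) U p q := by
          by_cases hpe : p = q
          · rw [hpe]
            exact joined_refl (Set.mem_iUnion₂.mpr ⟨c (j+1), hmem (j+1) hj, hqmem⟩)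
          · exact joined_single (Set.mem_iUnion₂.mpr ⟨c j, hmem j (by omega), hpmem⟩)
              (Set.mem_iUnion₂.mpr ⟨c (j+1), hmem (j+1) hj, hqmem⟩) ⟨hpe, hpq⟩
        exact ⟨q, hqmem, joined_trans (joined_trans hjoin hzp) hpq'⟩
    obtain ⟨z, hz, hjoin⟩ := main m le_rfl
    refine joined_trans hjoin (key xb hxb z ?_ y' hy'x)
    rw [← hm]; exact hz
end
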